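/- arXiv:2205.15727 — 8 statements merged into one kernel-verified Lean document; each statement's English description precedes it below -/
import Mathlib

section
/- Let ν : [0,∞) → [0,∞) be a function such that ζ ↦ ν(ζ)ζ is strongly monotone with constant m_ν > 0. Then for all vectors b₁, b₂ ∈ ℝ³ (with the Euclidean inner product ⟨·,·⟩ and norm ‖·‖₂) one has ⟨ν(‖b₁‖₂)b₁ − ν(‖b₂‖₂)b₂, b₁ − b₂⟩ ≥ m_ν ‖b₁ − b₂‖₂². -/
/-!
Split both sides along the radial and angular directions:
`⟪a • x - b • y, x - y⟫ = (a‖x‖ - b‖y‖)(‖x‖ - ‖y‖) + (a + b)(‖x‖‖y‖ - ⟪x, y⟫)` and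
`‖x - y‖² = (‖x‖ - ‖y‖)² + 2(‖x‖‖y‖ - ⟪x, y⟫)`.
The radial parts are compared by the scalar strong monotonicity of `ζ ↦ ν ζ * ζ`. The angular
defect `‖x‖‖y‖ - ⟪x, y⟫` is nonnegative by Cauchy–Schwarz and vanishes when `x` or `y` is zero;
otherwise `ν ‖x‖, ν ‖y‖ ≥ m`, as strong monotonicity against `ς = 0` shows.
-/

open RealInnerProductSpace

theorem le_of_strongMonotone_mul_self {ν : ℝ → ℝ} {m : ℝ}
    (hmono : ∀ ζ ς : ℝ, 0 ≤ ζ → 0 ≤ ς → (ν ζ * ζ - ν ς * ς) * (ζ - ς) ≥ m * (ζ - ς) ^ 2)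
    {ζ : ℝ} (hζ : 0 < ζ) : m ≤ ν ζ := by
  have h := hmono ζ 0 hζ.le le_rfl
  simp only [mul_zero, sub_zero] at h
  nlinarith [mul_pos hζ hζ]

section InnerProductSpace

variable {E : Type*} [NormedAddCommGroup E] [InnerProductSpace ℝ E]

theorem inner_smul_sub_smul_sub_eq (a b : ℝ) (x y : E) :
    ⟪a • x - b • y, x - y⟫ =
      (a * ‖x‖ - b * ‖y‖) * (‖x‖ - ‖y‖) + (a + b) * (‖x‖ * ‖y‖ - ⟪x, y⟫) := by
  simp only [inner_sub_left, inner_sub_right, real_inner_smul_left,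
    real_inner_self_eq_norm_sq, real_inner_comm x y]
  ring

theorem norm_sub_sq_eq_sq_sub_norm_add (x y : E) :
    ‖x - y‖ ^ 2 = (‖x‖ - ‖y‖) ^ 2 + 2 * (‖x‖ * ‖y‖ - ⟪x, y⟫) := by
  rw [norm_sub_sq_real]
  ring

theorem inner_smul_norm_sub_smul_norm_ge {ν : ℝ → ℝ} {m : ℝ}
    (hmono : ∀ ζ ς : ℝ, 0 ≤ ζ → 0 ≤ ς → (ν ζ * ζ - ν ς * ς) * (ζ - ς) ≥ m * (ζ - ς) ^ 2)
    (x y : E) : ⟪ν ‖x‖ • x - ν ‖y‖ • y, x - y⟫ ≥ m * ‖x - y‖ ^ 2 := by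
  have hradial := hmono ‖x‖ ‖y‖ (norm_nonneg x) (norm_nonneg y)
  have hangular : (ν ‖x‖ + ν ‖y‖) * (‖x‖ * ‖y‖ - ⟪x, y⟫) ≥ 2 * m * (‖x‖ * ‖y‖ - ⟪x, y⟫) := by
    rcases eq_or_ne x 0 with rfl | hx
    · simp
    rcases eq_or_ne y 0 with rfl | hy
    · simp
    have hνx := le_of_strongMonotone_mul_self hmono (norm_pos_iff.mpr hx)
    have hνy := le_of_strongMonotone_mul_self hmono (norm_pos_iff.mpr hy)
    have hcs : 0 ≤ ‖x‖ * ‖y‖ - ⟪x, y⟫ := sub_nonneg.mpr (real_inner_le_norm x y)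
    exact mul_le_mul_of_nonneg_right (by linarith) hcs
  rw [inner_smul_sub_smul_sub_eq, norm_sub_sq_eq_sq_sub_norm_add]
  linarith

end InnerProductSpace

theorem pointwise_strong_monotonicity_general (ν : ℝ → ℝ) (mν : ℝ)
    (hmono : ∀ ζ ς : ℝ, 0 ≤ ζ → 0 ≤ ς →
      (ν ζ * ζ - ν ς * ς) * (ζ - ς) ≥ mν * (ζ - ς) ^ 2)
    (b₁ b₂ : EuclideanSpace ℝ (Fin 3)) :
    ⟪ν ‖b₁‖ • b₁ - ν ‖b₂‖ • b₂, b₁ - b₂⟫ ≥ mν * ‖b₁ - b₂‖ ^ 2 :=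
  inner_smul_norm_sub_smul_norm_ge hmono b₁ b₂

/-- Pointwise strong monotonicity of the vector field `b ↦ ν(‖b‖)·b` on `ℝ³`:
if `ζ ↦ ν ζ * ζ` is strongly monotone with constant `mν > 0` on `[0,∞)`, then for all
`b₁, b₂ ∈ ℝ³`, `⟪ν(‖b₁‖) b₁ − ν(‖b₂‖) b₂, b₁ − b₂⟫ ≥ mν ‖b₁ − b₂‖²`. -/
theorem pointwise_strong_monotonicity (ν : ℝ → ℝ) (mν : ℝ) (hmν : 0 < mν)
    (hν_nonneg : ∀ ζ : ℝ, 0 ≤ ζ → 0 ≤ ν ζ)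
    (hmono : ∀ ζ ς : ℝ, 0 ≤ ζ → 0 ≤ ς →
      (ν ζ * ζ - ν ς * ς) * (ζ - ς) ≥ mν * (ζ - ς) ^ 2)
    (b₁ b₂ : EuclideanSpace ℝ (Fin 3)) :
    ⟪ν ‖b₁‖ • b₁ - ν ‖b₂‖ • b₂, b₁ - b₂⟫ ≥ mν * ‖b₁ - b₂‖ ^ 2 :=
  pointwise_strong_monotonicity_general ν mν hmono b₁ b₂
end

section
/- Let Ω ⊂ ℝ³ be a bounded open set with Lebesgue measure, let ν : Ω × [0,∞) → [0,∞) be measurable such that for every ξ ∈ Ω the map ζ ↦ ν(ξ,ζ)ζ is Lipschitz continuous with a constant L_ν > 0 independent of ξ, and define ϑ(ξ,ρ) = ∫₀^{√ρ} ν(ξ,ζ)ζ dζ and Ẽ(B) = ∫_Ω ϑ(ξ, ‖B(ξ)‖₂²) dξ for B ∈ L²(Ω;ℝ³). Then for all B₁, B₂ ∈ L²(Ω;ℝ³), |Ẽ(B₁) − Ẽ(B₂)| ≤ (L_ν/2)·(‖B₁‖_{L²(Ω;ℝ³)} + ‖B₂‖_{L²(Ω;ℝ³)})·‖B₁ − B₂‖_{L²(Ω;ℝ³)}.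 -/
open MeasureTheory RealInnerProductSpace

/-- Local Lipschitz-type estimate for the magnetic energy functional
`Ẽ(B) = ∫_Ω ϑ(ξ, ‖B(ξ)‖²) dξ`, where `ϑ(ξ,ρ) = ∫₀^{√ρ} ν(ξ,ζ)ζ dζ`:
`|Ẽ(B₁) − Ẽ(B₂)| ≤ (Lν/2)(‖B₁‖_{L²} + ‖B₂‖_{L²})‖B₁ − B₂‖_{L²}`. -/
theorem energy_lipschitz_estimate
    (Ω : Set (EuclideanSpace ℝ (Fin 3))) (hΩo : IsOpen Ω) (hΩb : Bornology.IsBounded Ω)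
    (ν : EuclideanSpace ℝ (Fin 3) → ℝ → ℝ) (hν_meas : Measurable (Function.uncurry ν))
    (hν_nonneg : ∀ ξ ∈ Ω, ∀ ζ : ℝ, 0 ≤ ζ → 0 ≤ ν ξ ζ)
    (Lν : ℝ) (hLν : 0 < Lν)
    (hlip : ∀ ξ ∈ Ω, ∀ ζ ς : ℝ, 0 ≤ ζ → 0 ≤ ς →
      |ν ξ ζ * ζ - ν ξ ς * ς| ≤ Lν * |ζ - ς|)
    (ϑ : EuclideanSpace ℝ (Fin 3) → ℝ → ℝ)
    (hϑ : ∀ ξ ρ, ϑ ξ ρ = ∫ ζ in (0 : ℝ)..Real.sqrt ρ, ν ξ ζ * ζ)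
    (Etilde : (EuclideanSpace ℝ (Fin 3) → EuclideanSpace ℝ (Fin 3)) → ℝ)
    (hE : ∀ B, Etilde B = ∫ ξ in Ω, ϑ ξ (‖B ξ‖ ^ 2))
    (B₁ B₂ : EuclideanSpace ℝ (Fin 3) → EuclideanSpace ℝ (Fin 3))
    (hB₁ : MemLp B₁ 2 (volume.restrict Ω)) (hB₂ : MemLp B₂ 2 (volume.restrict Ω)) :
    |Etilde B₁ - Etilde B₂| ≤
      Lν / 2 * (Real.sqrt (∫ ξ in Ω, ‖B₁ ξ‖ ^ 2) + Real.sqrt (∫ ξ in Ω, ‖B₂ ξ‖ ^ 2)) *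
        Real.sqrt (∫ ξ in Ω, ‖B₁ ξ - B₂ ξ‖ ^ 2) := by
  classical
  have hfmeas : ∀ ξ, Measurable (fun ζ : ℝ => ν ξ ζ * ζ) := fun ξ =>
    (hν_meas.comp (measurable_prodMk_left)).mul measurable_id
  -- interval integrability on nonneg intervals
  have hii : ∀ ξ ∈ Ω, ∀ a b : ℝ, 0 ≤ a → a ≤ b →
      IntervalIntegrable (fun ζ => ν ξ ζ * ζ) volume a b := by
    intro ξ hξ a b ha hab
    rw [intervalIntegrable_iff_integrableOn_Ioc_of_le hab]
    refine ((integrableOn_const (C := Lν * b) measure_Ioc_lt_top.ne enorm_ne_top)).mono'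
      ((hfmeas ξ).aestronglyMeasurable.restrict) ?_
    filter_upwards [ae_restrict_mem measurableSet_Ioc] with ζ hζ
    have hζ0 : 0 ≤ ζ := ha.trans hζ.1.le
    have h := hlip ξ hξ ζ 0 hζ0 le_rfl
    simp only [mul_zero, sub_zero, abs_of_nonneg hζ0] at h
    have h' : ‖ν ξ ζ * ζ‖ ≤ Lν * ζ := by rw [Real.norm_eq_abs]; exact h
    have : Lν * ζ ≤ Lν * b := by have := hζ.2; nlinarith
    linarith
  -- key pointwise estimate (ordered version)
  have key0 : ∀ ξ ∈ Ω, ∀ a b : ℝ, 0 ≤ b → b ≤ a →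
      |ϑ ξ (a ^ 2) - ϑ ξ (b ^ 2)| ≤ Lν / 2 * (a ^ 2 - b ^ 2) := by
    intro ξ hξ a b hb hba
    have ha : 0 ≤ a := hb.trans hba
    rw [hϑ, hϑ, Real.sqrt_sq ha, Real.sqrt_sq hb]
    rw [intervalIntegral.integral_interval_sub_left (hii ξ hξ 0 a le_rfl ha)
      (hii ξ hξ 0 b le_rfl hb)]
    have hbound : ∀ᵐ ζ ∂volume.restrict (Set.uIoc b a), ‖ν ξ ζ * ζ‖ ≤ Lν * ζ := by
      rw [Set.uIoc_of_le hba]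
      filter_upwards [ae_restrict_mem measurableSet_Ioc] with ζ hζ
      have hζ0 : 0 ≤ ζ := hb.trans hζ.1.le
      have h := hlip ξ hξ ζ 0 hζ0 le_rfl
      rw [Real.norm_eq_abs]
      simpa [mul_zero, sub_zero, abs_of_nonneg hζ0] using h
    have hLi : IntervalIntegrable (fun ζ => Lν * ζ) volume b a :=
      intervalIntegral.intervalIntegrable_id.const_mul Lν
    have hest := intervalIntegral.norm_integral_le_abs_of_norm_le hbound hLi
    have hcalc : |∫ ζ in b..a, Lν * ζ| = Lν / 2 * (a ^ 2 - b ^ 2) := by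
      rw [intervalIntegral.integral_const_mul, integral_id, abs_of_nonneg]
      · ring
      · have : b ^ 2 ≤ a ^ 2 := by nlinarith
        have := hLν.le
        nlinarith
    calc |∫ ζ in b..a, ν ξ ζ * ζ| = ‖∫ ζ in b..a, ν ξ ζ * ζ‖ :=
          (Real.norm_eq_abs _).symm
      _ ≤ |∫ ζ in b..a, Lν * ζ| := hest
      _ = Lν / 2 * (a ^ 2 - b ^ 2) := hcalc
  -- general version
  have key : ∀ ξ ∈ Ω, ∀ a b : ℝ, 0 ≤ a → 0 ≤ b →
      |ϑ ξ (a ^ 2) - ϑ ξ (b ^ 2)| ≤ Lν / 2 * ((a + b) * |a - b|) := by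
    intro ξ hξ a b ha hb
    rcases le_total b a with h | h
    · have := key0 ξ hξ a b hb h
      have habs : |a - b| = a - b := abs_of_nonneg (by linarith)
      calc |ϑ ξ (a ^ 2) - ϑ ξ (b ^ 2)| ≤ Lν / 2 * (a ^ 2 - b ^ 2) := this
        _ = Lν / 2 * ((a + b) * |a - b|) := by rw [habs]; ring
    · have := key0 ξ hξ b a ha h
      have habs : |a - b| = b - a := by rw [abs_sub_comm]; exact abs_of_nonneg (by linarith)
      calc |ϑ ξ (a ^ 2) - ϑ ξ (b ^ 2)| = |ϑ ξ (b ^ 2) - ϑ ξ (a ^ 2)| := abs_sub_comm _ _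
        _ ≤ Lν / 2 * (b ^ 2 - a ^ 2) := this
        _ = Lν / 2 * ((a + b) * |a - b|) := by rw [habs]; ring
  -- ϑ ξ 0 = 0
  have hϑ0 : ∀ ξ, ϑ ξ 0 = 0 := by
    intro ξ; rw [hϑ, Real.sqrt_zero, intervalIntegral.integral_same]
  -- measurability of parametric interval integral
  have meas_int : ∀ w : EuclideanSpace ℝ (Fin 3) → ℝ, Measurable w → (∀ ξ, 0 ≤ w ξ) →
      StronglyMeasurable (fun ξ => ∫ ζ in (0:ℝ)..w ξ, ν ξ ζ * ζ) := by
    intro w hw hw0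
    have heq : (fun ξ => ∫ ζ in (0:ℝ)..w ξ, ν ξ ζ * ζ)
        = fun ξ => ∫ ζ, (Set.Ioc 0 (w ξ)).indicator (fun ζ => ν ξ ζ * ζ) ζ := by
      funext ξ
      rw [intervalIntegral.integral_of_le (hw0 ξ), ← integral_indicator measurableSet_Ioc]
    rw [heq]
    have hF : Measurable (fun p : EuclideanSpace ℝ (Fin 3) × ℝ =>
        (Set.Ioc 0 (w p.1)).indicator (fun ζ => ν p.1 ζ * ζ) p.2) := by
      have hset : MeasurableSet {p : EuclideanSpace ℝ (Fin 3) × ℝ | 0 < p.2 ∧ p.2 ≤ w p.1} :=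
        (measurableSet_lt measurable_const measurable_snd).inter
          (measurableSet_le measurable_snd (hw.comp measurable_fst))
      have : (fun p : EuclideanSpace ℝ (Fin 3) × ℝ =>
          (Set.Ioc 0 (w p.1)).indicator (fun ζ => ν p.1 ζ * ζ) p.2)
          = Set.indicator {p : EuclideanSpace ℝ (Fin 3) × ℝ | 0 < p.2 ∧ p.2 ≤ w p.1}
            (fun p => ν p.1 p.2 * p.2) := by
        funext p
        by_cases h : 0 < p.2 ∧ p.2 ≤ w p.1 <;>
          simp [Set.indicator_apply, Set.mem_Ioc, Set.mem_setOf_eq, h]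
      rw [this]
      exact (hν_meas.mul measurable_snd).indicator hset
    exact hF.stronglyMeasurable.integral_prod_right'
  -- a.e. strong measurability of the energy densities
  have aesm : ∀ B : EuclideanSpace ℝ (Fin 3) → EuclideanSpace ℝ (Fin 3),
      MemLp B 2 (volume.restrict Ω) →
      AEStronglyMeasurable (fun ξ => ϑ ξ (‖B ξ‖ ^ 2)) (volume.restrict Ω) := by
    intro B hB
    obtain ⟨g, hgsm, hgeq⟩ := hB.1
    have hgm : Measurable g := hgsm.measurable
    have hsm := meas_int (fun ξ => ‖g ξ‖) hgm.norm (fun ξ => norm_nonneg _)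
    refine hsm.aestronglyMeasurable.congr ?_
    filter_upwards [hgeq] with ξ hξ
    rw [hϑ, Real.sqrt_sq (norm_nonneg _), hξ]
  -- integrability of the energy densities
  have hsqint : ∀ B : EuclideanSpace ℝ (Fin 3) → EuclideanSpace ℝ (Fin 3),
      MemLp B 2 (volume.restrict Ω) →
      Integrable (fun ξ => ‖B ξ‖ ^ 2) (volume.restrict Ω) := fun B hB =>
    (memLp_two_iff_integrable_sq_norm hB.1).mp hB
  have hint : ∀ B : EuclideanSpace ℝ (Fin 3) → EuclideanSpace ℝ (Fin 3),
      MemLp B 2 (volume.restrict Ω) →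
      Integrable (fun ξ => ϑ ξ (‖B ξ‖ ^ 2)) (volume.restrict Ω) := by
    intro B hB
    refine ((hsqint B hB).const_mul (Lν / 2)).mono' (aesm B hB) ?_
    filter_upwards [ae_restrict_mem hΩo.measurableSet] with ξ hξ
    have h := key ξ hξ ‖B ξ‖ 0 (norm_nonneg _) le_rfl
    simp only [abs_of_nonneg (norm_nonneg (B ξ)), add_zero, sub_zero] at h
    have h0 : ϑ ξ ((0:ℝ) ^ 2) = 0 := by rw [show ((0:ℝ)^2) = 0 by norm_num, hϑ0]
    rw [h0, sub_zero] at h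
    calc ‖ϑ ξ (‖B ξ‖ ^ 2)‖ = |ϑ ξ (‖B ξ‖ ^ 2)| := rfl
      _ ≤ Lν / 2 * (‖B ξ‖ * ‖B ξ‖) := h
      _ = Lν / 2 * ‖B ξ‖ ^ 2 := by ring
  -- product integrability
  have hΔ : MemLp (fun ξ => B₁ ξ - B₂ ξ) 2 (volume.restrict Ω) := hB₁.sub hB₂
  have hprod : ∀ B : EuclideanSpace ℝ (Fin 3) → EuclideanSpace ℝ (Fin 3),
      MemLp B 2 (volume.restrict Ω) →
      Integrable (fun ξ => ‖B ξ‖ * ‖B₁ ξ - B₂ ξ‖) (volume.restrict Ω) := by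
    intro B hB
    refine ((hsqint B hB).add (hsqint _ hΔ)).mono'
      (hB.1.norm.mul hΔ.1.norm) ?_
    refine Filter.Eventually.of_forall fun ξ => ?_
    have h1 : (0:ℝ) ≤ ‖B ξ‖ := norm_nonneg _
    have h2 : (0:ℝ) ≤ ‖B₁ ξ - B₂ ξ‖ := norm_nonneg _
    rw [Real.norm_eq_abs, abs_of_nonneg (mul_nonneg h1 h2)]
    simp only [Pi.add_apply]
    nlinarith
  -- Hölder
  have holder : ∀ B : EuclideanSpace ℝ (Fin 3) → EuclideanSpace ℝ (Fin 3),
      MemLp B 2 (volume.restrict Ω) →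
      (∫ ξ in Ω, ‖B ξ‖ * ‖B₁ ξ - B₂ ξ‖) ≤
        Real.sqrt (∫ ξ in Ω, ‖B ξ‖ ^ 2) * Real.sqrt (∫ ξ in Ω, ‖B₁ ξ - B₂ ξ‖ ^ 2) := by
    intro B hB
    have conj : Real.HolderConjugate 2 2 := Real.holderConjugate_iff.mpr ⟨one_lt_two, by norm_num⟩
    have hBn : MemLp (fun ξ => ‖B ξ‖) (ENNReal.ofReal 2) (volume.restrict Ω) := by
      simpa using hB.norm
    have hΔn : MemLp (fun ξ => ‖B₁ ξ - B₂ ξ‖) (ENNReal.ofReal 2) (volume.restrict Ω) := by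
      simpa using hΔ.norm
    have h := integral_mul_le_Lp_mul_Lq_of_nonneg conj
      (Filter.Eventually.of_forall fun ξ => norm_nonneg (B ξ))
      (Filter.Eventually.of_forall fun ξ => norm_nonneg (B₁ ξ - B₂ ξ)) hBn hΔn
    have e1 : ∀ y : ℝ, y ^ (2:ℝ) = y ^ 2 := fun y => by
      rw [show (2:ℝ) = ((2:ℕ):ℝ) by norm_num, Real.rpow_natCast]
    simp only [e1] at h
    rw [← Real.sqrt_eq_rpow, ← Real.sqrt_eq_rpow] at h
    exact h
  -- main chain
  rw [hE, hE, ← integral_sub (hint B₁ hB₁) (hint B₂ hB₂)]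
  have habs : |∫ ξ in Ω, (ϑ ξ (‖B₁ ξ‖ ^ 2) - ϑ ξ (‖B₂ ξ‖ ^ 2))| ≤
      ∫ ξ in Ω, |ϑ ξ (‖B₁ ξ‖ ^ 2) - ϑ ξ (‖B₂ ξ‖ ^ 2)| := by
    simpa [Real.norm_eq_abs] using
      norm_integral_le_integral_norm (fun ξ => ϑ ξ (‖B₁ ξ‖ ^ 2) - ϑ ξ (‖B₂ ξ‖ ^ 2))
        (μ := volume.restrict Ω)
  have hmono : (∫ ξ in Ω, |ϑ ξ (‖B₁ ξ‖ ^ 2) - ϑ ξ (‖B₂ ξ‖ ^ 2)|) ≤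
      ∫ ξ in Ω, (Lν / 2 * (‖B₁ ξ‖ * ‖B₁ ξ - B₂ ξ‖) + Lν / 2 * (‖B₂ ξ‖ * ‖B₁ ξ - B₂ ξ‖)) := by
    refine integral_mono_ae ((hint B₁ hB₁).sub (hint B₂ hB₂)).abs
      (((hprod B₁ hB₁).const_mul _).add ((hprod B₂ hB₂).const_mul _)) ?_
    filter_upwards [ae_restrict_mem hΩo.measurableSet] with ξ hξ
    have h := key ξ hξ ‖B₁ ξ‖ ‖B₂ ξ‖ (norm_nonneg _) (norm_nonneg _)
    have h2 : |‖B₁ ξ‖ - ‖B₂ ξ‖| ≤ ‖B₁ ξ - B₂ ξ‖ := abs_norm_sub_norm_le _ _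
    have h3 : (0:ℝ) ≤ ‖B₁ ξ‖ + ‖B₂ ξ‖ := by positivity
    have h4 : (‖B₁ ξ‖ + ‖B₂ ξ‖) * |‖B₁ ξ‖ - ‖B₂ ξ‖| ≤
        (‖B₁ ξ‖ + ‖B₂ ξ‖) * ‖B₁ ξ - B₂ ξ‖ := mul_le_mul_of_nonneg_left h2 h3
    have h5 : Lν / 2 * ((‖B₁ ξ‖ + ‖B₂ ξ‖) * |‖B₁ ξ‖ - ‖B₂ ξ‖|) ≤
        Lν / 2 * ((‖B₁ ξ‖ + ‖B₂ ξ‖) * ‖B₁ ξ - B₂ ξ‖) :=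
      mul_le_mul_of_nonneg_left h4 (by positivity)
    refine le_trans (h.trans h5) (le_of_eq (by ring))
  have hsplit : (∫ ξ in Ω, (Lν / 2 * (‖B₁ ξ‖ * ‖B₁ ξ - B₂ ξ‖) +
        Lν / 2 * (‖B₂ ξ‖ * ‖B₁ ξ - B₂ ξ‖))) =
      Lν / 2 * (∫ ξ in Ω, ‖B₁ ξ‖ * ‖B₁ ξ - B₂ ξ‖) +
      Lν / 2 * (∫ ξ in Ω, ‖B₂ ξ‖ * ‖B₁ ξ - B₂ ξ‖) := by
    rw [integral_add ((hprod B₁ hB₁).const_mul _) ((hprod B₂ hB₂).const_mul _),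
      integral_const_mul, integral_const_mul]
  calc |∫ ξ in Ω, (ϑ ξ (‖B₁ ξ‖ ^ 2) - ϑ ξ (‖B₂ ξ‖ ^ 2))|
      ≤ ∫ ξ in Ω, |ϑ ξ (‖B₁ ξ‖ ^ 2) - ϑ ξ (‖B₂ ξ‖ ^ 2)| := habs
    _ ≤ ∫ ξ in Ω, (Lν / 2 * (‖B₁ ξ‖ * ‖B₁ ξ - B₂ ξ‖) +
          Lν / 2 * (‖B₂ ξ‖ * ‖B₁ ξ - B₂ ξ‖)) := hmono
    _ = Lν / 2 * (∫ ξ in Ω, ‖B₁ ξ‖ * ‖B₁ ξ - B₂ ξ‖) +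
        Lν / 2 * (∫ ξ in Ω, ‖B₂ ξ‖ * ‖B₁ ξ - B₂ ξ‖) := hsplit
    _ ≤ Lν / 2 * (Real.sqrt (∫ ξ in Ω, ‖B₁ ξ‖ ^ 2) *
          Real.sqrt (∫ ξ in Ω, ‖B₁ ξ - B₂ ξ‖ ^ 2)) +
        Lν / 2 * (Real.sqrt (∫ ξ in Ω, ‖B₂ ξ‖ ^ 2) *
          Real.sqrt (∫ ξ in Ω, ‖B₁ ξ - B₂ ξ‖ ^ 2)) := by
        have hc : (0:ℝ) ≤ Lν / 2 := by positivity
        exact add_le_add (mul_le_mul_of_nonneg_left (holder B₁ hB₁) hc)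
          (mul_le_mul_of_nonneg_left (holder B₂ hB₂) hc)
    _ = Lν / 2 * (Real.sqrt (∫ ξ in Ω, ‖B₁ ξ‖ ^ 2) + Real.sqrt (∫ ξ in Ω, ‖B₂ ξ‖ ^ 2)) *
        Real.sqrt (∫ ξ in Ω, ‖B₁ ξ - B₂ ξ‖ ^ 2) := by ring
end

section
/- Let Ω ⊂ ℝ³ be a bounded open set with Lebesgue measure, let ν : Ω × [0,∞) → [0,∞) be measurable such that for every ξ ∈ Ω the map ζ ↦ ν(ξ,ζ)ζ is strongly monotone with constant m_ν > 0 and Lipschitz continuous with constant L_ν > 0, both independent of ξ, and define ϑ(ξ,ρ) = ∫₀^{√ρ} ν(ξ,ζ)ζ dζ and Ẽ(B) = ∫_Ω ϑ(ξ, ‖B(ξ)‖₂²) dξ. Then for every B ∈ L²(Ω;ℝ³), (m_ν/2)·‖B‖²_{L²(Ω;ℝ³)} ≤ Ẽ(B) ≤ (L_ν/2)·‖B‖²_{L²(Ω;ℝ³)}. -/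
open MeasureTheory

/-- Two-sided quadratic bound for the magnetic energy functional
`Ẽ(B) = ∫_Ω ϑ(ξ, ‖B(ξ)‖²) dξ`, where `ϑ(ξ,ρ) = ∫₀^{√ρ} ν(ξ,ζ)ζ dζ`:
`(mν/2)‖B‖²_{L²} ≤ Ẽ(B) ≤ (Lν/2)‖B‖²_{L²}`. -/
theorem energy_two_sided_bounds
    (Ω : Set (EuclideanSpace ℝ (Fin 3))) (hΩo : IsOpen Ω) (hΩb : Bornology.IsBounded Ω)
    (ν : EuclideanSpace ℝ (Fin 3) → ℝ → ℝ) (hν_meas : Measurable (Function.uncurry ν))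
    (hν_nonneg : ∀ ξ ∈ Ω, ∀ ζ : ℝ, 0 ≤ ζ → 0 ≤ ν ξ ζ)
    (mν Lν : ℝ) (hmν : 0 < mν) (hLν : 0 < Lν)
    (hmono : ∀ ξ ∈ Ω, ∀ ζ ς : ℝ, 0 ≤ ζ → 0 ≤ ς →
      (ν ξ ζ * ζ - ν ξ ς * ς) * (ζ - ς) ≥ mν * (ζ - ς) ^ 2)
    (hlip : ∀ ξ ∈ Ω, ∀ ζ ς : ℝ, 0 ≤ ζ → 0 ≤ ς →
      |ν ξ ζ * ζ - ν ξ ς * ς| ≤ Lν * |ζ - ς|)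
    (ϑ : EuclideanSpace ℝ (Fin 3) → ℝ → ℝ)
    (hϑ : ∀ ξ ρ, ϑ ξ ρ = ∫ ζ in (0 : ℝ)..Real.sqrt ρ, ν ξ ζ * ζ)
    (Etilde : (EuclideanSpace ℝ (Fin 3) → EuclideanSpace ℝ (Fin 3)) → ℝ)
    (hE : ∀ B, Etilde B = ∫ ξ in Ω, ϑ ξ (‖B ξ‖ ^ 2))
    (B : EuclideanSpace ℝ (Fin 3) → EuclideanSpace ℝ (Fin 3))
    (hB : MemLp B 2 (volume.restrict Ω)) :
    mν / 2 * (∫ ξ in Ω, ‖B ξ‖ ^ 2) ≤ Etilde B ∧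
      Etilde B ≤ Lν / 2 * (∫ ξ in Ω, ‖B ξ‖ ^ 2) := by
  have hΩm : MeasurableSet Ω := hΩo.measurableSet
  set μ := volume.restrict Ω with hμ
  -- pointwise two-sided bound on ϑ
  have key : ∀ ξ ∈ Ω, ∀ s : ℝ, 0 ≤ s →
      mν / 2 * s ^ 2 ≤ ϑ ξ (s ^ 2) ∧ ϑ ξ (s ^ 2) ≤ Lν / 2 * s ^ 2 := by
    intro ξ hξ s hs0
    have hsq : Real.sqrt (s ^ 2) = s := Real.sqrt_sq hs0
    have hϑ' : ϑ ξ (s ^ 2) = ∫ ζ in (0:ℝ)..s, ν ξ ζ * ζ := by rw [hϑ, hsq]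
    have hlipOn : LipschitzOnWith (Real.toNNReal Lν) (fun ζ => ν ξ ζ * ζ) (Set.Icc 0 s) := by
      apply LipschitzOnWith.of_dist_le_mul
      intro x hx y hy
      rw [Real.dist_eq, Real.dist_eq, Real.coe_toNNReal _ hLν.le]
      exact hlip ξ hξ x y hx.1 hy.1
    have hcont : ContinuousOn (fun ζ => ν ξ ζ * ζ) (Set.Icc 0 s) :=
      hlipOn.continuousOn
    have hfi : IntervalIntegrable (fun ζ => ν ξ ζ * ζ) volume 0 s := by
      apply ContinuousOn.intervalIntegrable
      rwa [Set.uIcc_of_le hs0]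
    have hlow : ∀ ζ ∈ Set.Icc (0:ℝ) s, mν * ζ ≤ ν ξ ζ * ζ := by
      intro ζ hζ
      have h := hmono ξ hξ ζ 0 hζ.1 le_rfl
      rcases hζ.1.eq_or_lt with h0 | h0
      · simp [← h0]
      · have h' : mν * ζ * ζ ≤ ν ξ ζ * ζ * ζ := by nlinarith
        exact le_of_mul_le_mul_right h' h0
    have hup : ∀ ζ ∈ Set.Icc (0:ℝ) s, ν ξ ζ * ζ ≤ Lν * ζ := by
      intro ζ hζ
      have h := hlip ξ hξ ζ 0 hζ.1 le_rfl
      rw [mul_zero, sub_zero, sub_zero, abs_of_nonneg hζ.1] at h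
      exact (abs_le.1 h).2
    have hmint : IntervalIntegrable (fun ζ => mν * ζ) volume 0 s :=
      (continuous_const.mul continuous_id).intervalIntegrable 0 s
    have hLint : IntervalIntegrable (fun ζ => Lν * ζ) volume 0 s :=
      (continuous_const.mul continuous_id).intervalIntegrable 0 s
    have h1 : (∫ ζ in (0:ℝ)..s, mν * ζ) ≤ ∫ ζ in (0:ℝ)..s, ν ξ ζ * ζ :=
      intervalIntegral.integral_mono_on hs0 hmint hfi hlow
    have h2 : (∫ ζ in (0:ℝ)..s, ν ξ ζ * ζ) ≤ ∫ ζ in (0:ℝ)..s, Lν * ζ :=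
      intervalIntegral.integral_mono_on hs0 hfi hLint hup
    have hm : (∫ ζ in (0:ℝ)..s, mν * ζ) = mν / 2 * s ^ 2 := by
      rw [intervalIntegral.integral_const_mul, integral_id]; ring
    have hL : (∫ ζ in (0:ℝ)..s, Lν * ζ) = Lν / 2 * s ^ 2 := by
      rw [intervalIntegral.integral_const_mul, integral_id]; ring
    rw [hϑ']
    constructor
    · rw [← hm]; exact h1
    · rw [← hL]; exact h2
  have keyB : ∀ ξ ∈ Ω,
      mν / 2 * ‖B ξ‖ ^ 2 ≤ ϑ ξ (‖B ξ‖ ^ 2) ∧ ϑ ξ (‖B ξ‖ ^ 2) ≤ Lν / 2 * ‖B ξ‖ ^ 2 :=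
    fun ξ hξ => key ξ hξ ‖B ξ‖ (norm_nonneg _)
  have hkey_ae : ∀ᵐ ξ ∂μ,
      mν / 2 * ‖B ξ‖ ^ 2 ≤ ϑ ξ (‖B ξ‖ ^ 2) ∧ ϑ ξ (‖B ξ‖ ^ 2) ≤ Lν / 2 * ‖B ξ‖ ^ 2 :=
    (ae_restrict_iff' hΩm).2 (Filter.Eventually.of_forall keyB)
  -- integrability of ‖B‖²
  have hBsq : Integrable (fun ξ => ‖B ξ‖ ^ 2) μ := by
    have := hB.integrable_norm_rpow (by norm_num) (by norm_num)
    simpa [ENNReal.toReal_ofNat, Real.rpow_natCast] using this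
  -- measurable version of the energy density
  obtain ⟨B', hB'meas, hBB'⟩ :
      ∃ B', StronglyMeasurable B' ∧ B =ᵐ[μ] B' :=
    ⟨hB.aestronglyMeasurable.mk B, hB.aestronglyMeasurable.stronglyMeasurable_mk,
      hB.aestronglyMeasurable.ae_eq_mk⟩
  set F : (EuclideanSpace ℝ (Fin 3)) × ℝ → ℝ :=
    fun p => Set.indicator {q : (EuclideanSpace ℝ (Fin 3)) × ℝ | 0 < q.2 ∧ q.2 ≤ ‖B' q.1‖}
      (fun q => ν q.1 q.2 * q.2) p with hF
  have hFmeas : Measurable F := by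
    apply Measurable.indicator
    · exact hν_meas.mul measurable_snd
    · exact MeasurableSet.inter
        (measurableSet_lt measurable_const measurable_snd)
        (measurableSet_le measurable_snd (hB'meas.measurable.norm.comp measurable_fst))
  have hGmeas : StronglyMeasurable (fun ξ => ∫ ζ, F (ξ, ζ)) :=
    hFmeas.stronglyMeasurable.integral_prod_right'
  have hGae : (fun ξ => ϑ ξ (‖B ξ‖ ^ 2)) =ᵐ[μ] fun ξ => ∫ ζ, F (ξ, ζ) := by
    filter_upwards [hBB'] with ξ hξ
    have hn : (0:ℝ) ≤ ‖B' ξ‖ := norm_nonneg _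
    have : ϑ ξ (‖B ξ‖ ^ 2) = ∫ ζ in (0:ℝ)..‖B' ξ‖, ν ξ ζ * ζ := by
      rw [hϑ, hξ, Real.sqrt_sq hn]
    rw [this, intervalIntegral.integral_of_le hn, ← integral_indicator measurableSet_Ioc]
    refine integral_congr_ae (Filter.Eventually.of_forall fun ζ => ?_)
    simp [hF, Set.indicator_apply, Set.mem_Ioc]
  have hGasm : AEStronglyMeasurable (fun ξ => ϑ ξ (‖B ξ‖ ^ 2)) μ :=
    hGmeas.aestronglyMeasurable.congr hGae.symm
  -- integrability of the energy density by domination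
  have hϑint : Integrable (fun ξ => ϑ ξ (‖B ξ‖ ^ 2)) μ := by
    apply Integrable.mono' (hBsq.const_mul (Lν / 2)) hGasm
    filter_upwards [hkey_ae] with ξ hξ
    have h0 : (0:ℝ) ≤ mν / 2 * ‖B ξ‖ ^ 2 := by positivity
    rw [Real.norm_eq_abs, abs_le]
    constructor
    · linarith [hξ.1]
    · exact hξ.2
  rw [hE]
  constructor
  · calc mν / 2 * (∫ ξ in Ω, ‖B ξ‖ ^ 2) = ∫ ξ, mν / 2 * ‖B ξ‖ ^ 2 ∂μ := by
          rw [integral_const_mul]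
      _ ≤ ∫ ξ in Ω, ϑ ξ (‖B ξ‖ ^ 2) := by
          apply integral_mono_ae (hBsq.const_mul _) hϑint
          filter_upwards [hkey_ae] with ξ hξ using hξ.1
  · calc (∫ ξ in Ω, ϑ ξ (‖B ξ‖ ^ 2)) ≤ ∫ ξ, Lν / 2 * ‖B ξ‖ ^ 2 ∂μ := by
          apply integral_mono_ae hϑint (hBsq.const_mul _)
          filter_upwards [hkey_ae] with ξ hξ using hξ.2
      _ = Lν / 2 * (∫ ξ in Ω, ‖B ξ‖ ^ 2) := by rw [integral_const_mul]
end

section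
/- Let Ω ⊂ ℝ³ be a bounded open set with Lebesgue measure, let ν : Ω × [0,∞) → [0,∞) be measurable such that for every ξ ∈ Ω the map ζ ↦ ν(ξ,ζ)ζ is strongly monotone with constant m_ν > 0 and Lipschitz continuous with constant L_ν > 0, both independent of ξ, and define ϑ(ξ,ρ) = ∫₀^{√ρ} ν(ξ,ζ)ζ dζ and Ẽ(B) = ∫_Ω ϑ(ξ, ‖B(ξ)‖₂²) dξ. Then Ẽ is Gâteaux differentiable on L²(Ω;ℝ³): for all B, F ∈ L²(Ω;ℝ³), the limit of (Ẽ(B + λF) − Ẽ(B))/λ as λ → 0, λ ≠ 0, exists and equals ∫_Ω ν(ξ, ‖B(ξ)‖₂) · (B(ξ) · F(ξ)) dξ, where B(ξ)·F(ξ) is the Euclidean inner product in ℝ³. -/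
open MeasureTheory RealInnerProductSpace Filter

set_option maxHeartbeats 1000000

/-- Gâteaux differentiability of the magnetic energy functional
`Ẽ(B) = ∫_Ω ϑ(ξ, ‖B(ξ)‖²) dξ`, where `ϑ(ξ,ρ) = ∫₀^{√ρ} ν(ξ,ζ)ζ dζ`: for all
`B, F ∈ L²(Ω;ℝ³)`, `(Ẽ(B + λF) − Ẽ(B))/λ → ∫_Ω ν(ξ,‖B(ξ)‖) ⟪B(ξ), F(ξ)⟫ dξ` as
`λ → 0`, `λ ≠ 0`. -/
theorem energy_gateaux_differentiable
    (Ω : Set (EuclideanSpace ℝ (Fin 3))) (hΩo : IsOpen Ω) (hΩb : Bornology.IsBounded Ω)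
    (ν : EuclideanSpace ℝ (Fin 3) → ℝ → ℝ) (hν_meas : Measurable (Function.uncurry ν))
    (hν_nonneg : ∀ ξ ∈ Ω, ∀ ζ : ℝ, 0 ≤ ζ → 0 ≤ ν ξ ζ)
    (mν Lν : ℝ) (hmν : 0 < mν) (hLν : 0 < Lν)
    (hmono : ∀ ξ ∈ Ω, ∀ ζ ς : ℝ, 0 ≤ ζ → 0 ≤ ς →
      (ν ξ ζ * ζ - ν ξ ς * ς) * (ζ - ς) ≥ mν * (ζ - ς) ^ 2)
    (hlip : ∀ ξ ∈ Ω, ∀ ζ ς : ℝ, 0 ≤ ζ → 0 ≤ ς →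
      |ν ξ ζ * ζ - ν ξ ς * ς| ≤ Lν * |ζ - ς|)
    (ϑ : EuclideanSpace ℝ (Fin 3) → ℝ → ℝ)
    (hϑ : ∀ ξ ρ, ϑ ξ ρ = ∫ ζ in (0 : ℝ)..Real.sqrt ρ, ν ξ ζ * ζ)
    (Etilde : (EuclideanSpace ℝ (Fin 3) → EuclideanSpace ℝ (Fin 3)) → ℝ)
    (hE : ∀ B, Etilde B = ∫ ξ in Ω, ϑ ξ (‖B ξ‖ ^ 2))
    (B F : EuclideanSpace ℝ (Fin 3) → EuclideanSpace ℝ (Fin 3))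
    (hB : MemLp B 2 (volume.restrict Ω)) (hF : MemLp F 2 (volume.restrict Ω)) :
    Tendsto (fun lam : ℝ => (Etilde (fun ξ => B ξ + lam • F ξ) - Etilde B) / lam)
      (nhdsWithin (0 : ℝ) {0}ᶜ)
      (nhds (∫ ξ in Ω, ν ξ ‖B ξ‖ * ⟪B ξ, F ξ⟫)) := by
  classical
  set μ := volume.restrict Ω with hμdef
  set g : EuclideanSpace ℝ (Fin 3) → ℝ → ℝ := fun ξ ζ => ν ξ ζ * ζ with hgdef
  -- basic properties of g
  have hgmeas : ∀ ξ, Measurable (g ξ) := by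
    intro ξ
    exact (hν_meas.comp (measurable_const.prodMk measurable_id)).mul measurable_id
  have hgbound : ∀ ξ ∈ Ω, ∀ ζ : ℝ, 0 ≤ ζ → |g ξ ζ| ≤ Lν * ζ := by
    intro ξ hξ ζ hζ
    have := hlip ξ hξ ζ 0 hζ le_rfl
    simpa [hgdef, abs_of_nonneg hζ] using this
  have hgcont : ∀ ξ ∈ Ω, ContinuousOn (g ξ) (Set.Ici 0) := by
    intro ξ hξ
    have : LipschitzOnWith (Real.toNNReal Lν) (g ξ) (Set.Ici 0) := by
      apply LipschitzOnWith.of_dist_le_mul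
      intro x hx y hy
      rw [Real.dist_eq, Real.dist_eq, Real.coe_toNNReal _ hLν.le]
      exact hlip ξ hξ x y hx hy
    exact this.continuousOn
  have hgint : ∀ ξ ∈ Ω, ∀ a b : ℝ, 0 ≤ a → 0 ≤ b →
      IntervalIntegrable (g ξ) volume a b := by
    intro ξ hξ a b ha hb
    apply ContinuousOn.intervalIntegrable
    apply (hgcont ξ hξ).mono
    intro x hx
    exact le_trans (le_min ha hb) hx.1
  -- the primitive Φ
  set Φ : EuclideanSpace ℝ (Fin 3) → ℝ → ℝ := fun ξ t => ∫ ζ in (0:ℝ)..t, g ξ ζ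
    with hΦdef
  have hϑΦ : ∀ ξ (x : EuclideanSpace ℝ (Fin 3)), ϑ ξ (‖x‖ ^ 2) = Φ ξ ‖x‖ := by
    intro ξ x
    rw [hϑ, Real.sqrt_sq (norm_nonneg x)]
  have hΦ0 : ∀ ξ, Φ ξ 0 = 0 := by intro ξ; simp [hΦdef]
  have hΦsub : ∀ ξ ∈ Ω, ∀ a b : ℝ, 0 ≤ a → 0 ≤ b →
      Φ ξ a - Φ ξ b = ∫ ζ in b..a, g ξ ζ := by
    intro ξ hξ a b ha hb
    exact intervalIntegral.integral_interval_sub_left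
      (hgint ξ hξ 0 a le_rfl ha) (hgint ξ hξ 0 b le_rfl hb)
  have hΦbound : ∀ ξ ∈ Ω, ∀ a b : ℝ, 0 ≤ a → 0 ≤ b →
      |Φ ξ a - Φ ξ b| ≤ Lν * max a b * |a - b| := by
    intro ξ hξ a b ha hb
    rw [hΦsub ξ hξ a b ha hb]
    have : ∀ x ∈ Set.uIoc b a, ‖g ξ x‖ ≤ Lν * max a b := by
      intro x hx
      have hx0 : 0 ≤ x := le_trans (le_min hb ha) hx.1.le
      have hx1 : x ≤ max a b := le_trans hx.2 (max_le (le_max_right a b) (le_max_left a b))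
      calc ‖g ξ x‖ ≤ Lν * x := hgbound ξ hξ x hx0
        _ ≤ Lν * max a b := by nlinarith
    have h := intervalIntegral.norm_integral_le_of_norm_le_const this
    simpa using h
  -- measurability of ξ ↦ Φ ξ ‖C ξ‖ for measurable C
  have hΨmeas : StronglyMeasurable (fun p : (EuclideanSpace ℝ (Fin 3)) × ℝ =>
      ∫ ζ, (Set.Ioc (0:ℝ) p.2).indicator (g p.1) ζ) := by
    have hm : Measurable (fun q : ((EuclideanSpace ℝ (Fin 3)) × ℝ) × ℝ =>
        if q.2 ∈ Set.Ioc (0:ℝ) q.1.2 then g q.1.1 q.2 else 0) := by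
      apply Measurable.ite
      · have : {q : ((EuclideanSpace ℝ (Fin 3)) × ℝ) × ℝ | q.2 ∈ Set.Ioc (0:ℝ) q.1.2}
            = {q | (0:ℝ) < q.2} ∩ {q | q.2 ≤ q.1.2} := by
          ext q; simp [Set.mem_Ioc, Set.mem_setOf_eq, Set.mem_inter_iff]
        rw [this]
        exact (measurableSet_lt measurable_const measurable_snd).inter
          (measurableSet_le measurable_snd measurable_fst.snd)
      · exact (hν_meas.comp (measurable_fst.fst.prodMk measurable_snd)).mul measurable_snd
      · exact measurable_const
    have hm2 : Measurable (fun q : ((EuclideanSpace ℝ (Fin 3)) × ℝ) × ℝ =>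
        (Set.Ioc (0:ℝ) q.1.2).indicator (g q.1.1) q.2) := by
      simpa only [Set.indicator_apply] using hm
    exact hm2.stronglyMeasurable.integral_prod_right'
  have hkey : ∀ (C : EuclideanSpace ℝ (Fin 3) → EuclideanSpace ℝ (Fin 3)),
      Measurable C → Measurable (fun ξ => Φ ξ ‖C ξ‖) := by
    intro C hC
    have heq : (fun ξ => Φ ξ ‖C ξ‖)
        = fun ξ => ∫ ζ, (Set.Ioc (0:ℝ) ‖C ξ‖).indicator (g ξ) ζ := by
      funext ξ
      rw [hΦdef]
      simp only
      rw [intervalIntegral.integral_of_le (norm_nonneg (C ξ)),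
        ← MeasureTheory.integral_indicator measurableSet_Ioc]
    rw [heq]
    exact hΨmeas.measurable.comp (measurable_id.prodMk hC.norm)
  -- AE strong measurability and integrability of the energy densities
  have haesm : ∀ (C : EuclideanSpace ℝ (Fin 3) → EuclideanSpace ℝ (Fin 3)),
      MemLp C 2 μ → AEStronglyMeasurable (fun ξ => ϑ ξ (‖C ξ‖ ^ 2)) μ := by
    intro C hC
    refine ((hkey (hC.1.mk C) hC.1.measurable_mk).aestronglyMeasurable).congr ?_
    filter_upwards [hC.1.ae_eq_mk] with ξ hξ
    rw [hϑΦ, hξ]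
  have hsq_int : ∀ (C : EuclideanSpace ℝ (Fin 3) → EuclideanSpace ℝ (Fin 3)),
      MemLp C 2 μ → Integrable (fun ξ => ‖C ξ‖ ^ 2) μ := by
    intro C hC
    have h := hC.integrable_norm_rpow (by norm_num) (by norm_num)
    have : (fun ξ => ‖C ξ‖ ^ ((2:ENNReal).toReal)) = fun ξ => ‖C ξ‖ ^ 2 := by
      funext ξ
      rw [ENNReal.toReal_ofNat]
      exact Real.rpow_two ‖C ξ‖
    rwa [this] at h
  have hint : ∀ (C : EuclideanSpace ℝ (Fin 3) → EuclideanSpace ℝ (Fin 3)),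
      MemLp C 2 μ → Integrable (fun ξ => ϑ ξ (‖C ξ‖ ^ 2)) μ := by
    intro C hC
    refine Integrable.mono' ((hsq_int C hC).const_mul Lν) (haesm C hC) ?_
    filter_upwards [ae_restrict_mem hΩo.measurableSet] with ξ hξ
    rw [hϑΦ]
    have h := hΦbound ξ hξ ‖C ξ‖ 0 (norm_nonneg _) le_rfl
    rw [hΦ0] at h
    have hmax : max ‖C ξ‖ (0:ℝ) = ‖C ξ‖ := max_eq_left (norm_nonneg _)
    rw [hmax, sub_zero, sub_zero, abs_of_nonneg (norm_nonneg _)] at h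
    calc ‖Φ ξ ‖C ξ‖‖ = |Φ ξ ‖C ξ‖| := rfl
      _ ≤ Lν * ‖C ξ‖ * ‖C ξ‖ := h
      _ = Lν * ‖C ξ‖ ^ 2 := by ring
  have hMem : ∀ lam : ℝ, MemLp (fun ξ => B ξ + lam • F ξ) 2 μ := by
    intro lam
    exact hB.add (hF.const_smul lam)
  -- rewrite the difference quotient as a single integral
  have hrw : ∀ lam : ℝ, (Etilde (fun ξ => B ξ + lam • F ξ) - Etilde B) / lam
      = ∫ ξ in Ω, (ϑ ξ (‖B ξ + lam • F ξ‖ ^ 2) - ϑ ξ (‖B ξ‖ ^ 2)) / lam := by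
    intro lam
    rw [hE, hE, ← MeasureTheory.integral_sub (hint _ (hMem lam)) (hint _ hB),
      ← MeasureTheory.integral_div]
  have hfun : (fun lam : ℝ => (Etilde (fun ξ => B ξ + lam • F ξ) - Etilde B) / lam)
      = fun lam : ℝ => ∫ ξ in Ω, (ϑ ξ (‖B ξ + lam • F ξ‖ ^ 2) - ϑ ξ (‖B ξ‖ ^ 2)) / lam :=
    funext hrw
  rw [hfun]
  -- dominated convergence
  apply MeasureTheory.tendsto_integral_filter_of_dominated_convergence
    (bound := fun ξ => Lν * (‖B ξ‖ ^ 2 + 2 * ‖F ξ‖ ^ 2))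
  · -- measurability
    apply Filter.Eventually.of_forall
    intro lam
    simp only [div_eq_mul_inv]
    exact ((haesm _ (hMem lam)).sub (haesm _ hB)).mul_const lam⁻¹
  · -- uniform bound for |lam| ≤ 1
    have hev : ∀ᶠ lam : ℝ in nhdsWithin (0:ℝ) {0}ᶜ, |lam| ≤ 1 := by
      apply eventually_nhdsWithin_of_eventually_nhds
      have h1 : ∀ᶠ lam : ℝ in nhds 0, lam ∈ Set.Icc (-1:ℝ) 1 :=
        Icc_mem_nhds (by norm_num) (by norm_num)
      filter_upwards [h1] with lam h using abs_le.2 h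
    filter_upwards [hev] with lam hlam
    filter_upwards [ae_restrict_mem hΩo.measurableSet] with ξ hξ
    rw [hϑΦ, hϑΦ]
    set a := ‖B ξ + lam • F ξ‖ with hadef
    set b := ‖B ξ‖ with hbdef
    have ha0 : 0 ≤ a := norm_nonneg _
    have hb0 : 0 ≤ b := norm_nonneg _
    have hf0 : 0 ≤ ‖F ξ‖ := norm_nonneg _
    have hab : |a - b| ≤ |lam| * ‖F ξ‖ := by
      have h := abs_norm_sub_norm_le (B ξ + lam • F ξ) (B ξ)
      simpa [hadef, hbdef, norm_smul] using h
    have hmaxle : max a b ≤ b + |lam| * ‖F ξ‖ := by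
      apply max_le
      · calc a ≤ ‖B ξ‖ + ‖lam • F ξ‖ := norm_add_le _ _
          _ = b + |lam| * ‖F ξ‖ := by rw [norm_smul, Real.norm_eq_abs]
      · nlinarith [abs_nonneg lam]
    have h1 := hΦbound ξ hξ a b ha0 hb0
    have hmax0 : 0 ≤ max a b := le_max_of_le_left ha0
    rcases eq_or_ne lam 0 with hl | hl
    · simp only [hl, div_zero, norm_zero]
      positivity
    · have hlpos : 0 < |lam| := abs_pos.2 hl
      rw [norm_div, Real.norm_eq_abs, Real.norm_eq_abs, div_le_iff₀ hlpos]
      have step1 : |Φ ξ a - Φ ξ b| ≤ Lν * max a b * (|lam| * ‖F ξ‖) := by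
        calc |Φ ξ a - Φ ξ b| ≤ Lν * max a b * |a - b| := h1
          _ ≤ Lν * max a b * (|lam| * ‖F ξ‖) := by
              apply mul_le_mul_of_nonneg_left hab
              positivity
      have step2 : Lν * max a b * (|lam| * ‖F ξ‖)
          ≤ Lν * (b + ‖F ξ‖) * (|lam| * ‖F ξ‖) := by
        have hm2 : max a b ≤ b + ‖F ξ‖ := by
          refine le_trans hmaxle ?_
          nlinarith
        exact mul_le_mul_of_nonneg_right (mul_le_mul_of_nonneg_left hm2 hLν.le)
          (by positivity)
      have step3 : Lν * (b + ‖F ξ‖) * (|lam| * ‖F ξ‖)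
          ≤ Lν * (b ^ 2 + 2 * ‖F ξ‖ ^ 2) * |lam| := by
        have h2 : (b + ‖F ξ‖) * ‖F ξ‖ ≤ b ^ 2 + 2 * ‖F ξ‖ ^ 2 := by
          nlinarith [sq_nonneg (b - ‖F ξ‖)]
        have h3 : Lν * ((b + ‖F ξ‖) * ‖F ξ‖) ≤ Lν * (b ^ 2 + 2 * ‖F ξ‖ ^ 2) :=
          mul_le_mul_of_nonneg_left h2 hLν.le
        nlinarith [mul_le_mul_of_nonneg_right h3 (abs_nonneg lam)]
      linarith
  · -- integrability of the bound
    exact (((hsq_int B hB).add ((hsq_int F hF).const_mul 2)).const_mul Lν)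
  · -- pointwise convergence
    filter_upwards [ae_restrict_mem hΩo.measurableSet] with ξ hξ
    rcases eq_or_ne (B ξ) 0 with hB0 | hB0
    · -- at a zero of B the limit is 0, by squeezing
      have hval : ν ξ ‖B ξ‖ * ⟪B ξ, F ξ⟫ = 0 := by
        rw [hB0]; simp
      rw [hval]
      have hbd : ∀ᶠ lam : ℝ in nhdsWithin (0:ℝ) {0}ᶜ,
          ‖(ϑ ξ (‖B ξ + lam • F ξ‖ ^ 2) - ϑ ξ (‖B ξ‖ ^ 2)) / lam‖
            ≤ Lν * ‖F ξ‖ ^ 2 * |lam| := by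
        apply Filter.Eventually.of_forall
        intro lam
        rcases eq_or_ne lam 0 with hl | hl
        · simp [hl]
        · have hlpos : 0 < |lam| := abs_pos.2 hl
          rw [hϑΦ, hϑΦ, hB0]
          simp only [norm_zero, zero_add]
          rw [hΦ0, sub_zero, norm_div, Real.norm_eq_abs, Real.norm_eq_abs,
            div_le_iff₀ hlpos]
          have h := hΦbound ξ hξ ‖lam • F ξ‖ 0 (norm_nonneg _) le_rfl
          rw [hΦ0, sub_zero, sub_zero, max_eq_left (norm_nonneg _),
            abs_of_nonneg (norm_nonneg _)] at h
          have hns : ‖lam • F ξ‖ = |lam| * ‖F ξ‖ := by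
            rw [norm_smul, Real.norm_eq_abs]
          rw [hns] at h
          calc |Φ ξ ‖lam • F ξ‖| = |Φ ξ (|lam| * ‖F ξ‖)| := by rw [hns]
            _ ≤ Lν * (|lam| * ‖F ξ‖) * (|lam| * ‖F ξ‖) := h
            _ = Lν * ‖F ξ‖ ^ 2 * |lam| * |lam| := by ring
            _ ≤ Lν * ‖F ξ‖ ^ 2 * |lam| * |lam| := le_rfl
      have hz : Tendsto (fun lam : ℝ => Lν * ‖F ξ‖ ^ 2 * |lam|)
          (nhdsWithin (0:ℝ) {0}ᶜ) (nhds 0) := by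
        have h1 : Tendsto (fun lam : ℝ => |lam|) (nhds (0:ℝ)) (nhds (0:ℝ)) := by
          simpa using (continuous_abs.tendsto (0:ℝ))
        have h2 := h1.const_mul (Lν * ‖F ξ‖ ^ 2)
        rw [mul_zero] at h2
        exact h2.mono_left nhdsWithin_le_nhds
      exact squeeze_zero_norm' hbd hz
    · -- B ξ ≠ 0 : chain rule
      have hb : (0:ℝ) < ‖B ξ‖ := norm_pos_iff.2 hB0
      set c : ℝ := ⟪B ξ, F ξ⟫ with hcdef
      -- derivative of lam ↦ ‖B ξ + lam • F ξ‖² at 0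
      have hq : (fun lam : ℝ => ‖B ξ + lam • F ξ‖ ^ 2)
          = fun lam : ℝ => ‖B ξ‖ ^ 2 + 2 * c * lam + ‖F ξ‖ ^ 2 * lam ^ 2 := by
        funext lam
        rw [norm_add_sq_real, real_inner_smul_right, norm_smul, Real.norm_eq_abs,
          mul_pow, sq_abs]
        ring
      have hfd : HasDerivAt (fun lam : ℝ => ‖B ξ + lam • F ξ‖ ^ 2) (2 * c) 0 := by
        rw [hq]
        have h1 : HasDerivAt (fun lam : ℝ => 2 * c * lam) (2 * c) 0 := by
          simpa using (hasDerivAt_id (0:ℝ)).const_mul (2 * c)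
        have h2 : HasDerivAt (fun lam : ℝ => ‖F ξ‖ ^ 2 * lam ^ 2) 0 0 := by
          simpa using (hasDerivAt_pow 2 (0:ℝ)).const_mul (‖F ξ‖ ^ 2)
        exact (((hasDerivAt_const (0:ℝ) (‖B ξ‖ ^ 2)).add h1).add h2).congr_deriv (by simp)
      -- derivative of lam ↦ ‖B ξ + lam • F ξ‖ at 0
      have hf00 : ‖B ξ + (0:ℝ) • F ξ‖ ^ 2 = ‖B ξ‖ ^ 2 := by simp
      have hsq' : HasDerivAt Real.sqrt (1 / (2 * ‖B ξ‖))
          ((fun lam : ℝ => ‖B ξ + lam • F ξ‖ ^ 2) 0) := by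
        simp only [hf00]
        have := Real.hasDerivAt_sqrt (show (‖B ξ‖ ^ 2 : ℝ) ≠ 0 by positivity)
        simpa [Real.sqrt_sq hb.le] using this
      have hnd : HasDerivAt (fun lam : ℝ => ‖B ξ + lam • F ξ‖) (c / ‖B ξ‖) 0 := by
        have hcomp := hsq'.comp 0 hfd
        have heq : (Real.sqrt ∘ fun lam : ℝ => ‖B ξ + lam • F ξ‖ ^ 2)
            = fun lam : ℝ => ‖B ξ + lam • F ξ‖ := by
          funext lam
          simp [Function.comp, Real.sqrt_sq (norm_nonneg _)]
        rw [heq] at hcomp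
        exact hcomp.congr_deriv (by
          rw [div_mul_eq_mul_div, one_mul, mul_div_mul_left _ _ (two_ne_zero' ℝ)])
      -- derivative of the primitive at ‖B ξ‖
      have hGd : HasDerivAt (Φ ξ) (g ξ ‖B ξ‖) ‖B ξ‖ := by
        apply intervalIntegral.integral_hasDerivAt_right
          (hgint ξ hξ 0 ‖B ξ‖ le_rfl (norm_nonneg _))
        · exact (hgmeas ξ).stronglyMeasurable.stronglyMeasurableAtFilter
        · exact (hgcont ξ hξ).continuousAt (Ici_mem_nhds hb)
      have hGd' : HasDerivAt (Φ ξ) (g ξ ‖B ξ‖) ((fun lam : ℝ => ‖B ξ + lam • F ξ‖) 0) := by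
        simpa using hGd
      have hcomp2 := hGd'.comp 0 hnd
      -- identify the derivative value
      have hval : g ξ ‖B ξ‖ * (c / ‖B ξ‖) = ν ξ ‖B ξ‖ * c := by
        rw [hgdef]
        field_simp
      rw [hval] at hcomp2
      have htend := hasDerivAt_iff_tendsto_slope.1 hcomp2
      refine Tendsto.congr' ?_ htend
      filter_upwards [self_mem_nhdsWithin] with lam hlam
      have hlam0 : lam ≠ 0 := hlam
      rw [slope_def_field]
      simp only [Function.comp]
      rw [hϑΦ, hϑΦ]
      have : ‖B ξ + (0:ℝ) • F ξ‖ = ‖B ξ‖ := by simp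
      rw [this, sub_zero]
end

section
/- Let Ω ⊂ ℝ³ be a bounded open set with Lebesgue measure, let ν : Ω × [0,∞) → [0,∞) be measurable such that for every ξ ∈ Ω the map ζ ↦ ν(ξ,ζ)ζ is nonnegative and monotonically increasing on [0,∞), and define ϑ(ξ,ρ) = ∫₀^{√ρ} ν(ξ,ζ)ζ dζ and Ẽ(B) = ∫_Ω ϑ(ξ, ‖B(ξ)‖₂²) dξ (with values in ℝ ∪ {+∞}). Then Ẽ is convex on L²(Ω;ℝ³): for all B₁, B₂ ∈ L²(Ω;ℝ³) and all λ ∈ [0,1], Ẽ(λB₁ + (1−λ)B₂) ≤ λ·Ẽ(B₁) + (1−λ)·Ẽ(B₂). -/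
open MeasureTheory


private lemma theta_meas {E : Type*} [MeasurableSpace E] {ν : E → ℝ → ℝ}
    (hν : Measurable (Function.uncurry ν)) :
    Measurable fun p : E × ℝ => ∫ ζ in (0 : ℝ)..Real.sqrt p.2, ν p.1 ζ * ζ := by
  have heq : (fun p : E × ℝ => ∫ ζ in (0 : ℝ)..Real.sqrt p.2, ν p.1 ζ * ζ)
      = fun p : E × ℝ => ∫ ζ, (Set.Ioc (0:ℝ) (Real.sqrt p.2)).indicator
          (fun ζ => ν p.1 ζ * ζ) ζ := by
    funext p
    rw [intervalIntegral.integral_of_le (Real.sqrt_nonneg _),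
      ← integral_indicator measurableSet_Ioc]
  rw [heq]
  have hF : StronglyMeasurable fun q : (E × ℝ) × ℝ =>
      (Set.Ioc (0:ℝ) (Real.sqrt q.1.2)).indicator (fun ζ => ν q.1.1 ζ * ζ) q.2 := by
    apply Measurable.stronglyMeasurable
    simp only [Set.indicator_apply, Set.mem_Ioc]
    refine Measurable.ite ?_ ?_ measurable_const
    · exact MeasurableSet.inter
        (measurableSet_lt measurable_const (measurable_snd))
        (measurableSet_le measurable_snd
          ((Real.continuous_sqrt.measurable).comp (measurable_fst.snd)))
    · exact ((hν.comp ((measurable_fst.fst).prodMk measurable_snd)).mul measurable_snd)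
  exact hF.integral_prod_right'.measurable

private lemma pointwise_key (h : ℝ → ℝ) (hmeas : Measurable h)
    (hnn : ∀ ζ : ℝ, 0 ≤ ζ → 0 ≤ h ζ)
    (hmono : ∀ ζ ς : ℝ, 0 ≤ ζ → ζ ≤ ς → h ζ ≤ h ς)
    (a b lam : ℝ) (ha : 0 ≤ a) (hb : 0 ≤ b) (h0 : 0 ≤ lam) (h1 : lam ≤ 1)
    (c : ℝ) (hc : 0 ≤ c) (hcab : c ≤ lam * a + (1 - lam) * b) :
    (∫ ζ in (0:ℝ)..c, h ζ) ≤
      lam * (∫ ζ in (0:ℝ)..a, h ζ) + (1 - lam) * ∫ ζ in (0:ℝ)..b, h ζ := by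
  set g : ℝ → ℝ := fun t => ∫ ζ in (0:ℝ)..t, h ζ with hg
  have hInt : ∀ s t : ℝ, 0 ≤ s → s ≤ t → IntervalIntegrable h volume s t := by
    intro s t hs hst
    rw [intervalIntegrable_iff_integrableOn_Ioc_of_le hst]
    refine Integrable.mono' (integrable_const (h t)) hmeas.aestronglyMeasurable ?_
    filter_upwards [ae_restrict_mem measurableSet_Ioc] with ζ hζ
    rw [Real.norm_eq_abs, abs_of_nonneg (hnn ζ (hs.trans hζ.1.le))]
    exact hmono ζ t (hs.trans hζ.1.le) hζ.2
  -- g is monotone on [0, ∞)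
  have hg_mono : ∀ s t : ℝ, 0 ≤ s → s ≤ t → g s ≤ g t := by
    intro s t hs hst
    have hadj := intervalIntegral.integral_add_adjacent_intervals
      (hInt 0 s le_rfl hs) (hInt s t hs hst)
    have hpos : 0 ≤ ∫ ζ in s..t, h ζ :=
      intervalIntegral.integral_nonneg hst (fun u hu => hnn u (hs.trans hu.1))
    simp only [hg]
    linarith [hadj]
  -- slope bounds
  have hub : ∀ s t : ℝ, 0 ≤ s → s ≤ t → (∫ ζ in s..t, h ζ) ≤ h t * (t - s) := by
    intro s t hs hst
    have := intervalIntegral.integral_mono_on hst (hInt s t hs hst)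
      intervalIntegrable_const (fun u hu => hmono u t (hs.trans hu.1) hu.2)
    simpa [mul_comm] using this
  have hlb : ∀ s t : ℝ, 0 ≤ s → s ≤ t → h s * (t - s) ≤ ∫ ζ in s..t, h ζ := by
    intro s t hs hst
    have := intervalIntegral.integral_mono_on hst intervalIntegrable_const
      (hInt s t hs hst) (fun u hu => hmono s u hs hu.1)
    simpa [mul_comm] using this
  -- convexity of g on Ici 0
  have hg_conv : ConvexOn ℝ (Set.Ici (0:ℝ)) g := by
    refine convexOn_of_slope_mono_adjacent (convex_Ici 0) ?_
    intro x y z hx hz hxy hyz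
    have hx' : (0:ℝ) ≤ x := hx
    have hy' : (0:ℝ) ≤ y := hx'.trans hxy.le
    have h1' : g y - g x = ∫ ζ in x..y, h ζ := by
      have := intervalIntegral.integral_add_adjacent_intervals
        (hInt 0 x le_rfl hx') (hInt x y hx' hxy.le)
      simp only [hg]; linarith
    have h2' : g z - g y = ∫ ζ in y..z, h ζ := by
      have := intervalIntegral.integral_add_adjacent_intervals
        (hInt 0 y le_rfl hy') (hInt y z hy' hyz.le)
      simp only [hg]; linarith
    rw [h1', h2', div_le_div_iff₀ (by linarith) (by linarith)]
    have hu := hub x y hx' hxy.le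
    have hl := hlb y z hy' hyz.le
    nlinarith [hu, hl, mul_nonneg (mul_nonneg (hnn y hy') (by linarith : (0:ℝ) ≤ y - x)) (by linarith : (0:ℝ) ≤ z - y)]
  -- combine
  have hmem : lam * a + (1 - lam) * b ∈ Set.Ici (0:ℝ) :=
    add_nonneg (mul_nonneg h0 ha) (mul_nonneg (by linarith) hb)
  have step1 : g c ≤ g (lam * a + (1 - lam) * b) := hg_mono c _ hc hcab
  have step2 : g (lam * a + (1 - lam) * b) ≤ lam * g a + (1 - lam) * g b := by
    have := hg_conv.2 (Set.mem_Ici.2 ha) (Set.mem_Ici.2 hb) h0 (by linarith : (0:ℝ) ≤ 1 - lam) (by ring)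
    simpa [smul_eq_mul] using this
  exact le_trans step1 (by simpa [hg] using step2)

/-- Convexity of the magnetic energy functional
`Ẽ(B) = ∫_Ω ϑ(ξ, ‖B(ξ)‖²) dξ ∈ ℝ ∪ {+∞}`, where `ϑ(ξ,ρ) = ∫₀^{√ρ} ν(ξ,ζ)ζ dζ` and
`ζ ↦ ν(ξ,ζ)ζ` is nonnegative and increasing: for `B₁, B₂ ∈ L²(Ω;ℝ³)` and `λ ∈ [0,1]`,
`Ẽ(λB₁ + (1−λ)B₂) ≤ λ Ẽ(B₁) + (1−λ) Ẽ(B₂)`. The possibly infinite values are modeled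
via the lower Lebesgue integral in `ℝ≥0∞`. -/
theorem energy_convex
    (Ω : Set (EuclideanSpace ℝ (Fin 3))) (hΩo : IsOpen Ω) (hΩb : Bornology.IsBounded Ω)
    (ν : EuclideanSpace ℝ (Fin 3) → ℝ → ℝ) (hν_meas : Measurable (Function.uncurry ν))
    (hν_nonneg : ∀ ξ ∈ Ω, ∀ ζ : ℝ, 0 ≤ ζ → 0 ≤ ν ξ ζ)
    (hincr : ∀ ξ ∈ Ω, ∀ ζ ς : ℝ, 0 ≤ ζ → ζ ≤ ς → ν ξ ζ * ζ ≤ ν ξ ς * ς)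
    (ϑ : EuclideanSpace ℝ (Fin 3) → ℝ → ℝ)
    (hϑ : ∀ ξ ρ, ϑ ξ ρ = ∫ ζ in (0 : ℝ)..Real.sqrt ρ, ν ξ ζ * ζ)
    (Etilde : (EuclideanSpace ℝ (Fin 3) → EuclideanSpace ℝ (Fin 3)) → ENNReal)
    (hE : ∀ B, Etilde B = ∫⁻ ξ in Ω, ENNReal.ofReal (ϑ ξ (‖B ξ‖ ^ 2)))
    (B₁ B₂ : EuclideanSpace ℝ (Fin 3) → EuclideanSpace ℝ (Fin 3))
    (hB₁ : MemLp B₁ 2 (volume.restrict Ω)) (hB₂ : MemLp B₂ 2 (volume.restrict Ω))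
    (lam : ℝ) (hlam0 : 0 ≤ lam) (hlam1 : lam ≤ 1) :
    Etilde (fun ξ => lam • B₁ ξ + (1 - lam) • B₂ ξ) ≤
      ENNReal.ofReal lam * Etilde B₁ + ENNReal.ofReal (1 - lam) * Etilde B₂ := by
  -- measurability of ϑ (uncurried)
  have hθ : Measurable (Function.uncurry ϑ) := by
    have : Function.uncurry ϑ = fun p : EuclideanSpace ℝ (Fin 3) × ℝ =>
        ∫ ζ in (0 : ℝ)..Real.sqrt p.2, ν p.1 ζ * ζ :=
      funext fun p => hϑ p.1 p.2
    rw [this]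
    exact theta_meas hν_meas
  -- a.e. measurability of the integrands
  have hf : ∀ (B : EuclideanSpace ℝ (Fin 3) → EuclideanSpace ℝ (Fin 3)),
      AEStronglyMeasurable B (volume.restrict Ω) →
      AEMeasurable (fun ξ => ENNReal.ofReal (ϑ ξ (‖B ξ‖ ^ 2))) (volume.restrict Ω) := by
    intro B hB
    have h1 : AEMeasurable (fun ξ => ‖B ξ‖ ^ 2) (volume.restrict Ω) :=
      (measurable_id.pow_const 2).comp_aemeasurable hB.norm.aemeasurable
    have h2 : AEMeasurable (fun ξ => ϑ ξ (‖B ξ‖ ^ 2)) (volume.restrict Ω) :=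
      hθ.comp_aemeasurable (aemeasurable_id.prodMk h1)
    exact ENNReal.measurable_ofReal.comp_aemeasurable h2
  have hf₁ := hf B₁ hB₁.1
  have hf₂ := hf B₂ hB₂.1
  -- pointwise a.e. bound on Ω
  have hptw : ∀ᵐ ξ ∂(volume.restrict Ω),
      ENNReal.ofReal (ϑ ξ (‖lam • B₁ ξ + (1 - lam) • B₂ ξ‖ ^ 2)) ≤
        ENNReal.ofReal lam * ENNReal.ofReal (ϑ ξ (‖B₁ ξ‖ ^ 2)) +
        ENNReal.ofReal (1 - lam) * ENNReal.ofReal (ϑ ξ (‖B₂ ξ‖ ^ 2)) := by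
    filter_upwards [ae_restrict_mem hΩo.measurableSet] with ξ hξ
    have hc : ‖lam • B₁ ξ + (1 - lam) • B₂ ξ‖ ≤ lam * ‖B₁ ξ‖ + (1 - lam) * ‖B₂ ξ‖ := by
      calc ‖lam • B₁ ξ + (1 - lam) • B₂ ξ‖ ≤ ‖lam • B₁ ξ‖ + ‖(1 - lam) • B₂ ξ‖ :=
            norm_add_le _ _
        _ = lam * ‖B₁ ξ‖ + (1 - lam) * ‖B₂ ξ‖ := by
            rw [norm_smul, norm_smul, Real.norm_eq_abs, Real.norm_eq_abs,
              abs_of_nonneg hlam0, abs_of_nonneg (by linarith : (0:ℝ) ≤ 1 - lam)]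
    have key := pointwise_key (fun ζ => ν ξ ζ * ζ)
      ((hν_meas.comp (measurable_const.prodMk measurable_id)).mul measurable_id)
      (fun ζ hζ => mul_nonneg (hν_nonneg ξ hξ ζ hζ) hζ)
      (hincr ξ hξ) ‖B₁ ξ‖ ‖B₂ ξ‖ lam (norm_nonneg _) (norm_nonneg _) hlam0 hlam1
      ‖lam • B₁ ξ + (1 - lam) • B₂ ξ‖ (norm_nonneg _) hc
    have hrw : ∀ x : EuclideanSpace ℝ (Fin 3),
        ϑ ξ (‖x‖ ^ 2) = ∫ ζ in (0:ℝ)..‖x‖, ν ξ ζ * ζ := by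
      intro x
      rw [hϑ, Real.sqrt_sq (norm_nonneg x)]
    have key' : ϑ ξ (‖lam • B₁ ξ + (1 - lam) • B₂ ξ‖ ^ 2) ≤
        lam * ϑ ξ (‖B₁ ξ‖ ^ 2) + (1 - lam) * ϑ ξ (‖B₂ ξ‖ ^ 2) := by
      rw [hrw, hrw, hrw]; exact key
    calc ENNReal.ofReal (ϑ ξ (‖lam • B₁ ξ + (1 - lam) • B₂ ξ‖ ^ 2))
        ≤ ENNReal.ofReal (lam * ϑ ξ (‖B₁ ξ‖ ^ 2) + (1 - lam) * ϑ ξ (‖B₂ ξ‖ ^ 2)) :=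
          ENNReal.ofReal_le_ofReal key'
      _ ≤ ENNReal.ofReal (lam * ϑ ξ (‖B₁ ξ‖ ^ 2)) +
            ENNReal.ofReal ((1 - lam) * ϑ ξ (‖B₂ ξ‖ ^ 2)) := ENNReal.ofReal_add_le
      _ = ENNReal.ofReal lam * ENNReal.ofReal (ϑ ξ (‖B₁ ξ‖ ^ 2)) +
            ENNReal.ofReal (1 - lam) * ENNReal.ofReal (ϑ ξ (‖B₂ ξ‖ ^ 2)) := by
          rw [ENNReal.ofReal_mul hlam0, ENNReal.ofReal_mul (by linarith : (0:ℝ) ≤ 1 - lam)]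
  -- conclude
  rw [hE, hE, hE]
  calc (∫⁻ ξ in Ω, ENNReal.ofReal (ϑ ξ (‖lam • B₁ ξ + (1 - lam) • B₂ ξ‖ ^ 2)))
      ≤ ∫⁻ ξ in Ω, (ENNReal.ofReal lam * ENNReal.ofReal (ϑ ξ (‖B₁ ξ‖ ^ 2)) +
          ENNReal.ofReal (1 - lam) * ENNReal.ofReal (ϑ ξ (‖B₂ ξ‖ ^ 2))) :=
        lintegral_mono_ae hptw
    _ = (∫⁻ ξ in Ω, ENNReal.ofReal lam * ENNReal.ofReal (ϑ ξ (‖B₁ ξ‖ ^ 2))) +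
          ∫⁻ ξ in Ω, ENNReal.ofReal (1 - lam) * ENNReal.ofReal (ϑ ξ (‖B₂ ξ‖ ^ 2)) :=
        lintegral_add_left' (hf₁.const_mul _) _
    _ = ENNReal.ofReal lam * (∫⁻ ξ in Ω, ENNReal.ofReal (ϑ ξ (‖B₁ ξ‖ ^ 2))) +
          ENNReal.ofReal (1 - lam) * ∫⁻ ξ in Ω, ENNReal.ofReal (ϑ ξ (‖B₂ ξ‖ ^ 2)) := by
        rw [lintegral_const_mul'' _ hf₁, lintegral_const_mul'' _ hf₂]
end

section
/- Let X and Z be real Hilbert spaces, let E : X → Z be a bounded linear operator with dense range, and let φ : X → ℝ ∪ {+∞} be proper, densely defined, convex, lower semicontinuous and E-elliptic. Define φ_E(z) = inf{φ(x) : x ∈ X, Ex = z} (with inf ∅ = +∞). Then φ_E(z) > −∞ for every z ∈ Z, the effective domain of φ_E satisfies D(φ_E) = E(D(φ)) (the image of the effective domain of φ under E), and D(φ_E) is dense in Z. -/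
/-! The shifted functional `ψ = (ω/2)‖E ·‖² + φ` is convex, lower semicontinuous and coercive.
Hahn–Banach separates its closed convex epigraph from a point below it, giving a continuous affine
minorant; this minorant is bounded below on the bounded sublevel set `{ψ ≤ 0}`, so `ψ ≥ m`
everywhere and hence `φ_E(z) ≥ m - (ω/2)‖z‖²`. Finally `D(φ_E) = E(D(φ))` is dense because a
continuous map with dense range sends dense sets to dense sets. -/

open RealInnerProductSpace MeasureTheory

/-- Convexity for an `EReal`-valued functional. -/
def ConvexEReal {V : Type*} [AddCommGroup V] [Module ℝ V] (φ : V → EReal) : Prop :=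
  ∀ x y : V, ∀ a b : ℝ, 0 ≤ a → 0 ≤ b → a + b = 1 →
    φ (a • x + b • y) ≤ (a : EReal) * φ x + (b : EReal) * φ y

/-- Coercivity: all sublevel sets are bounded. -/
def CoerciveEReal {V : Type*} [NormedAddCommGroup V] (φ : V → EReal) : Prop :=
  ∀ c : ℝ, Bornology.IsBounded {x : V | φ x ≤ (c : EReal)}

/-- `E`-ellipticity of a functional `φ` : there is `ω ∈ ℝ` such that the shifted
functional `x ↦ (ω/2)‖E x‖² + φ(x)` is convex and coercive. -/
def IsElliptic {X Z : Type*} [NormedAddCommGroup X] [InnerProductSpace ℝ X]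
    [NormedAddCommGroup Z] [InnerProductSpace ℝ Z]
    (E : X →L[ℝ] Z) (φ : X → EReal) : Prop :=
  ∃ ω : ℝ, ConvexEReal (fun x => ((ω / 2 * ‖E x‖ ^ 2 : ℝ) : EReal) + φ x) ∧
    CoerciveEReal (fun x => ((ω / 2 * ‖E x‖ ^ 2 : ℝ) : EReal) + φ x)

/-- Push-forward functional `φ_E(z) = inf {φ(x) : E x = z}` (with `inf ∅ = +∞`). -/
noncomputable def pushForward {X Z : Type*} [NormedAddCommGroup X] [InnerProductSpace ℝ X]
    [NormedAddCommGroup Z] [InnerProductSpace ℝ Z]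
    (E : X →L[ℝ] Z) (φ : X → EReal) : Z → EReal :=
  fun z => sInf (φ '' {x : X | E x = z})

variable {X Z : Type*} [NormedAddCommGroup X] [InnerProductSpace ℝ X] [CompleteSpace X]
  [NormedAddCommGroup Z] [InnerProductSpace ℝ Z] [CompleteSpace Z]

section ConvexEReal

variable {V : Type*} {φ : V → EReal}

theorem ConvexEReal.convex_epigraph [AddCommGroup V] [Module ℝ V] (hφ : ConvexEReal φ) :
    Convex ℝ {p : V × ℝ | φ p.1 ≤ p.2} := by
  rintro ⟨x, s⟩ hx ⟨y, t⟩ hy a b ha hb hab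
  calc φ (a • x + b • y) ≤ (a : EReal) * φ x + (b : EReal) * φ y := hφ x y a b ha hb hab
    _ ≤ (a : EReal) * s + (b : EReal) * t := by
      have ha' : (0 : EReal) ≤ a := by exact_mod_cast ha
      have hb' : (0 : EReal) ≤ b := by exact_mod_cast hb
      exact add_le_add (mul_le_mul_of_nonneg_left hx ha') (mul_le_mul_of_nonneg_left hy hb')
    _ = ((a * s + b * t : ℝ) : EReal) := by norm_cast

theorem LowerSemicontinuous.isClosed_real_epigraph [TopologicalSpace V]
    (hφ : LowerSemicontinuous φ) : IsClosed {p : V × ℝ | φ p.1 ≤ p.2} :=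
  hφ.isClosed_epigraph.preimage
    (continuous_fst.prodMk (continuous_coe_real_ereal.comp continuous_snd))

theorem ConvexEReal.exists_affine_le [TopologicalSpace V] [AddCommGroup V] [Module ℝ V]
    [IsTopologicalAddGroup V] [ContinuousSMul ℝ V] [LocallyConvexSpace ℝ V]
    (hconv : ConvexEReal φ) (hlsc : LowerSemicontinuous φ) (hbot : ∀ x, φ x ≠ ⊥) :
    ∃ (ℓ : StrongDual ℝ V) (b : ℝ), ∀ x, ((ℓ x + b : ℝ) : EReal) ≤ φ x := by
  by_cases hdom : ∃ x₀, φ x₀ ≠ ⊤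
  swap
  · simp only [not_exists, not_not] at hdom
    exact ⟨0, 0, fun x => by simp [hdom x]⟩
  obtain ⟨x₀, hx₀⟩ := hdom
  set r := (φ x₀).toReal
  have hr : φ x₀ = r := (EReal.coe_toReal hx₀ (hbot x₀)).symm
  have hbelow : ¬φ x₀ ≤ ((r - 1 : ℝ) : EReal) := by
    rw [hr, EReal.coe_le_coe_iff]
    linarith
  obtain ⟨f, u, hfu, hsep⟩ := geometric_hahn_banach_point_closed hconv.convex_epigraph
    hlsc.isClosed_real_epigraph (x := (x₀, r - 1)) hbelow
  set c := f (0, 1)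
  have hsplit : ∀ x t, f (x, t) = f (x, 0) + t * c := fun x t => by
    rw [← smul_eq_mul, ← f.map_smul, ← map_add]
    simp
  have hc : 0 < c := by
    have := hsep (x₀, r) (by simp [hr])
    rw [hsplit] at this hfu
    nlinarith
  -- `u < f (x, 0) + t * c` on the epigraph, i.e. `t > (u - f (x, 0)) / c`
  refine ⟨-c⁻¹ • f.comp (.inl ℝ V ℝ), u / c, fun x => ?_⟩
  rcases eq_or_ne (φ x) ⊤ with htop | htop
  · simp [htop]
  have hx := EReal.coe_toReal htop (hbot x)
  have hmem := hsep (x, (φ x).toReal) (by simp [hx])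
  rw [hsplit] at hmem
  rw [← hx, EReal.coe_le_coe_iff]
  have key : (u - f (x, 0)) / c ≤ (φ x).toReal := by
    rw [div_le_iff₀ hc]
    linarith
  convert key using 1
  simp only [FunLike.coe_smul, ContinuousLinearMap.coe_comp, Pi.smul_apply,
    Function.comp_apply, ContinuousLinearMap.inl_apply, smul_eq_mul]
  field_simp
  ring

theorem ConvexEReal.exists_forall_le [NormedAddCommGroup V] [NormedSpace ℝ V]
    (hconv : ConvexEReal φ) (hlsc : LowerSemicontinuous φ) (hbot : ∀ x, φ x ≠ ⊥)
    (hcoer : CoerciveEReal φ) : ∃ m : ℝ, ∀ x, (m : EReal) ≤ φ x := by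
  obtain ⟨ℓ, b, hℓ⟩ := hconv.exists_affine_le hlsc hbot
  obtain ⟨R, hR⟩ := isBounded_iff_forall_norm_le.1 (hcoer 0)
  refine ⟨min 0 (b - ‖ℓ‖ * R), fun x => ?_⟩
  rcases le_or_gt (φ x) ((0 : ℝ) : EReal) with hle | hgt
  · have hℓx : -(‖ℓ‖ * R) ≤ ℓ x := by
      calc -(‖ℓ‖ * R) ≤ -(‖ℓ‖ * ‖x‖) := by gcongr; exact hR x hle
        _ ≤ ℓ x := by rw [neg_le]; exact (neg_le_abs _).trans (ℓ.le_opNorm x)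
    refine le_trans ?_ (hℓ x)
    exact_mod_cast (min_le_right _ _).trans (by linarith)
  · exact le_trans (by exact_mod_cast min_le_left _ _) hgt.le

end ConvexEReal

section PushForward

variable {V W : Type*} [NormedAddCommGroup V] [InnerProductSpace ℝ V]
  [NormedAddCommGroup W] [InnerProductSpace ℝ W] (E : V →L[ℝ] W) (φ : V → EReal)

theorem le_pushForward_of_forall_le {ω m : ℝ}
    (hm : ∀ x, (m : EReal) ≤ ((ω / 2 * ‖E x‖ ^ 2 : ℝ) : EReal) + φ x) (z : W) :
    ((m - ω / 2 * ‖z‖ ^ 2 : ℝ) : EReal) ≤ pushForward E φ z := by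
  refine le_sInf ?_
  rintro _ ⟨x, rfl, rfl⟩
  rw [EReal.coe_sub]
  exact EReal.sub_le_of_le_add' (hm x)

theorem setOf_pushForward_lt_top :
    {z | pushForward E φ z < ⊤} = E '' {x | φ x < ⊤} := by
  ext z
  simp [pushForward, sInf_lt_iff, and_comm]

end PushForward

theorem pushForward_proper_domain_general (E : X →L[ℝ] Z) (hrange : Dense (Set.range E))
    (φ : X → EReal) (hbot : ∀ x, φ x ≠ ⊥)
    (hdense : Dense {x : X | φ x < ⊤})
    (hlsc : LowerSemicontinuous φ) (hell : IsElliptic E φ) :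
    (∀ z : Z, pushForward E φ z ≠ ⊥) ∧
      {z : Z | pushForward E φ z < ⊤} = E '' {x : X | φ x < ⊤} ∧
      Dense {z : Z | pushForward E φ z < ⊤} := by
  obtain ⟨ω, hconv, hcoer⟩ := hell
  have hshift_lsc : LowerSemicontinuous fun x => ((ω / 2 * ‖E x‖ ^ 2 : ℝ) : EReal) + φ x :=
    (continuous_coe_real_ereal.comp (by fun_prop)).lowerSemicontinuous.add' hlsc fun x =>
      EReal.continuousAt_add (.inl (EReal.coe_ne_top _)) (.inl (EReal.coe_ne_bot _))
  have hshift_bot : ∀ x, ((ω / 2 * ‖E x‖ ^ 2 : ℝ) : EReal) + φ x ≠ ⊥ := fun x =>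
    EReal.add_ne_bot_iff.2 ⟨EReal.coe_ne_bot _, hbot x⟩
  obtain ⟨m, hm⟩ := hconv.exists_forall_le hshift_lsc hshift_bot hcoer
  refine ⟨fun z => ne_bot_of_le_ne_bot (EReal.coe_ne_bot _) (le_pushForward_of_forall_le E φ hm z),
    setOf_pushForward_lt_top E φ, ?_⟩
  rw [setOf_pushForward_lt_top]
  exact DenseRange.dense_image hrange E.continuous hdense

/-- For a densely defined, proper, convex, lower semicontinuous and
`E`-elliptic functional `φ` with values in `ℝ ∪ {+∞}` and `E` with dense range, the
push-forward `φ_E(z) = inf {φ(x) : E x = z}` never takes the value `−∞`, its effective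
domain is `E(D(φ))`, and its effective domain is dense in `Z`. -/
theorem pushForward_proper_domain (E : X →L[ℝ] Z) (hrange : Dense (Set.range E))
    (φ : X → EReal) (hbot : ∀ x, φ x ≠ ⊥) (hproper : ∃ x, φ x < ⊤)
    (hdense : Dense {x : X | φ x < ⊤}) (hconv : ConvexEReal φ)
    (hlsc : LowerSemicontinuous φ) (hell : IsElliptic E φ) :
    (∀ z : Z, pushForward E φ z ≠ ⊥) ∧
      {z : Z | pushForward E φ z < ⊤} = E '' {x : X | φ x < ⊤} ∧
      Dense {z : Z | pushForward E φ z < ⊤} :=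
  pushForward_proper_domain_general E hrange φ hbot hdense hlsc hell
end

section
/- Let X and Z be real Hilbert spaces, let E : X → Z be a bounded linear operator with dense range, and let φ : X → ℝ ∪ {+∞} be proper, densely defined, convex, lower semicontinuous and E-elliptic. Then the functional φ_E : Z → ℝ ∪ {+∞} defined by φ_E(z) = inf{φ(x) : x ∈ X, Ex = z} (with inf ∅ = +∞) is lower semicontinuous on Z, i.e. every sublevel set {z ∈ Z : φ_E(z) ≤ λ} is closed in Z. -/
open RealInnerProductSpace MeasureTheory

variable {X Z : Type*} [NormedAddCommGroup X] [InnerProductSpace ℝ X] [CompleteSpace X]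
  [NormedAddCommGroup Z] [InnerProductSpace ℝ Z] [CompleteSpace Z]

open Filter Topology

/-- In a Hilbert space, a nested sequence of nonempty closed convex bounded sets has
nonempty intersection. -/
lemma nested_inter_nonempty (C : ℕ → Set X) (hne : ∀ n, (C n).Nonempty)
    (hcl : ∀ n, IsClosed (C n))
    (hcv : ∀ n, Convex ℝ (C n)) (hanti : ∀ {m n : ℕ}, m ≤ n → C n ⊆ C m)
    {R : ℝ} (hbd : ∀ n, C n ⊆ Metric.closedBall 0 R) :
    (⋂ n, C n).Nonempty := by
  have hproj : ∀ n, ∃ v ∈ C n, ‖(0:X) - v‖ = ⨅ w : C n, ‖(0:X) - w‖ := fun n =>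
    exists_norm_eq_iInf_of_complete_convex (hne n) (hcl n).isComplete (hcv n) 0
  choose u hu hun using hproj
  set d : ℕ → ℝ := fun n => ⨅ w : C n, ‖(0:X) - w‖ with hdd
  have hund : ∀ n, ‖u n‖ = d n := by
    intro n; have := hun n; rwa [zero_sub, norm_neg] at this
  have hd_le : ∀ n, ∀ w ∈ C n, d n ≤ ‖w‖ := by
    intro n w hw
    have : d n ≤ ‖(0:X) - w‖ := by
      haveI : Nonempty (C n) := (hne n).to_subtype
      exact ciInf_le ⟨0, by rintro y ⟨w', rfl⟩; positivity⟩ (⟨w, hw⟩ : C n)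
    rwa [zero_sub, norm_neg] at this
  have hd0 : ∀ n, 0 ≤ d n := fun n => (hund n) ▸ norm_nonneg _
  have hdR : ∀ n, d n ≤ R := by
    intro n
    have := hbd n (hu n)
    rw [Metric.mem_closedBall, dist_zero_right] at this
    exact (hund n) ▸ this
  have hmono : Monotone d := by
    intro m n h
    rw [← hund n]
    exact hd_le m (u n) (hanti h (hu n))
  have hbdd : BddAbove (Set.range d) := ⟨R, by rintro y ⟨n, rfl⟩; exact hdR n⟩
  set D : ℝ := ⨆ n, d n with hD
  have hdD : ∀ n, d n ≤ D := fun n => le_ciSup hbdd n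
  have hDtend : Tendsto d atTop (𝓝 D) := tendsto_atTop_ciSup hmono hbdd
  have key : ∀ n m, n ≤ m → ‖u n - u m‖ ^ 2 ≤ 2 * d m ^ 2 - 2 * d n ^ 2 := by
    intro n m hnm
    have hmid : (1/2 : ℝ) • u n + (1/2 : ℝ) • u m ∈ C n :=
      hcv n (hu n) (hanti hnm (hu m)) (by norm_num) (by norm_num) (by norm_num)
    have hmid' : d n ≤ ‖(1/2 : ℝ) • u n + (1/2 : ℝ) • u m‖ := hd_le n _ hmid
    have heq : ‖(1/2 : ℝ) • u n + (1/2 : ℝ) • u m‖ = (1/2) * ‖u n + u m‖ := by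
      rw [← smul_add, norm_smul]
      simp
    rw [heq] at hmid'
    have hpar := parallelogram_law_with_norm ℝ (u n) (u m)
    have h1 := hund n
    have h2 := hund m
    rw [h1, h2] at hpar
    have h4 : 4 * d n ^ 2 ≤ ‖u n + u m‖ ^ 2 := by nlinarith [hd0 n]
    nlinarith [hpar, h4]
  have hcauchy : CauchySeq u := by
    apply cauchySeq_of_le_tendsto_0 (fun N => Real.sqrt (2 * D ^ 2 - 2 * d N ^ 2))
    · intro n m N hn hm
      have est : ∀ a b, N ≤ a → N ≤ b → a ≤ b → dist (u a) (u b) ≤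
          Real.sqrt (2 * D ^ 2 - 2 * d N ^ 2) := by
        intro a b ha hb hab
        rw [dist_eq_norm]
        apply Real.le_sqrt_of_sq_le
        have := key a b hab
        have h1 : d N ≤ d a := hmono ha
        have h2 : d b ≤ D := hdD b
        nlinarith [hd0 a, hd0 b, hd0 N]
      rcases le_total n m with h | h
      · exact est n m hn hm h
      · rw [dist_comm]; exact est m n hm hn h
    · have h1 : Tendsto (fun N => 2 * D ^ 2 - 2 * d N ^ 2) atTop (𝓝 (2 * D ^ 2 - 2 * D ^ 2)) :=
        tendsto_const_nhds.sub (((hDtend.pow 2)).const_mul 2)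
      have h2 := (Real.continuous_sqrt.tendsto _).comp h1
      simpa [Function.comp_def] using h2
  obtain ⟨x, hx⟩ := cauchySeq_tendsto_of_complete hcauchy
  refine ⟨x, Set.mem_iInter.2 fun n => ?_⟩
  exact (hcl n).mem_of_tendsto hx (eventually_atTop.2 ⟨n, fun m hm => hanti hm (hu m)⟩)

/-- Sublevel sets of a convex `EReal`-valued functional are convex. -/
lemma convexEReal_sublevel {V : Type*} [AddCommGroup V] [Module ℝ V]
    {φ : V → EReal} (h : ConvexEReal φ) (t : EReal) : Convex ℝ {x | φ x ≤ t} := by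
  intro x hx y hy a b ha hb hab
  have h1 : φ (a • x + b • y) ≤ (a : EReal) * φ x + (b : EReal) * φ y := h x y a b ha hb hab
  have ha' : (0 : EReal) ≤ (a : EReal) := EReal.coe_nonneg.2 ha
  have hb' : (0 : EReal) ≤ (b : EReal) := EReal.coe_nonneg.2 hb
  have h2 : (a : EReal) * φ x + (b : EReal) * φ y ≤ (a : EReal) * t + (b : EReal) * t :=
    add_le_add (mul_le_mul_of_nonneg_left hx ha') (mul_le_mul_of_nonneg_left hy hb')
  have h3 : (a : EReal) * t + (b : EReal) * t = t := by
    rw [← EReal.right_distrib_of_nonneg ha' hb', ← EReal.coe_add, hab]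
    exact one_mul t
  exact le_trans h1 (h3 ▸ h2)

/-- For a densely defined, proper, convex, lower semicontinuous and
`E`-elliptic functional `φ` with values in `ℝ ∪ {+∞}` and `E` with dense range, the
push-forward functional `φ_E(z) = inf {φ(x) : E x = z}` is lower semicontinuous, i.e.
every sublevel set `{z : φ_E(z) ≤ λ}` (for `λ ∈ ℝ`) is closed in `Z`. -/
theorem pushForward_lowerSemicontinuous (E : X →L[ℝ] Z) (hrange : Dense (Set.range E))
    (φ : X → EReal) (hbot : ∀ x, φ x ≠ ⊥) (hproper : ∃ x, φ x < ⊤)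
    (hdense : Dense {x : X | φ x < ⊤}) (hconv : ConvexEReal φ)
    (hlsc : LowerSemicontinuous φ) (hell : IsElliptic E φ) :
    ∀ c : ℝ, IsClosed {z : Z | pushForward E φ z ≤ (c : EReal)} := by
  obtain ⟨ω, hψconv, hψcoer⟩ := hell
  intro c
  have hseq : IsSeqClosed {z : Z | pushForward E φ z ≤ (c : EReal)} := by
    intro zs z hmem hz
    set t : ℕ → EReal := fun n => ((c + 1/((n:ℝ)+1) : ℝ) : EReal) with ht
    have hpos : ∀ n : ℕ, (0:ℝ) < 1/((n:ℝ)+1) := fun n => by positivity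
    -- select approximate minimizers over the fibers
    have hsel : ∀ n : ℕ, ∃ x : X, E x = zs n ∧ φ x < t n := by
      intro n
      have h1 : sInf (φ '' {x : X | E x = zs n}) < t n := by
        refine lt_of_le_of_lt (hmem n) ?_
        exact EReal.coe_lt_coe_iff.2 (by linarith [hpos n])
      obtain ⟨v, hv, hvlt⟩ := sInf_lt_iff.1 h1
      obtain ⟨x, hx, rfl⟩ := hv
      exact ⟨x, hx, hvlt⟩
    choose xs hxs hφxs using hsel
    -- a uniform bound on the selected sequence, via coercivity
    obtain ⟨B, hB⟩ := (hz.norm).bddAbove_range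
    have hB' : ∀ n, ‖zs n‖ ≤ B := fun n => hB ⟨n, rfl⟩
    have hB0 : (0:ℝ) ≤ B := le_trans (norm_nonneg _) (hB' 0)
    set M : ℝ := |ω|/2 * B^2 + (c+1) with hM
    have hψ : ∀ n, xs n ∈ {x : X | ((ω / 2 * ‖E x‖ ^ 2 : ℝ) : EReal) + φ x ≤ (M : EReal)} := by
      intro n
      have h1 : φ (xs n) ≤ t n := (hφxs n).le
      have h2 : ((ω / 2 * ‖E (xs n)‖ ^ 2 : ℝ) : EReal) + φ (xs n) ≤
          ((ω / 2 * ‖zs n‖ ^ 2 : ℝ) : EReal) + t n := by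
        rw [hxs n]
        exact add_le_add_right h1 _
      refine le_trans h2 ?_
      rw [ht, ← EReal.coe_add, EReal.coe_le_coe_iff]
      have h3 : (1:ℝ)/((n:ℝ)+1) ≤ 1 := by
        rw [div_le_one (by positivity)]
        have : (0:ℝ) ≤ (n:ℝ) := Nat.cast_nonneg n
        linarith
      have hs2 : ‖zs n‖^2 ≤ B^2 := by nlinarith [hB' n, norm_nonneg (zs n)]
      have e1 : ω * ‖zs n‖^2 ≤ |ω| * ‖zs n‖^2 :=
        mul_le_mul_of_nonneg_right (le_abs_self ω) (sq_nonneg _)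
      have e2 : |ω| * ‖zs n‖^2 ≤ |ω| * B^2 := mul_le_mul_of_nonneg_left hs2 (abs_nonneg ω)
      linarith
    obtain ⟨R, hR⟩ := (hψcoer M).subset_closedBall 0
    -- the nested closed convex hulls of the tails
    set C : ℕ → Set X := fun n => closure (convexHull ℝ (xs '' Set.Ici n)) with hC
    have hCne : ∀ n, (C n).Nonempty := fun n =>
      ⟨xs n, subset_closure (subset_convexHull ℝ _ ⟨n, le_refl n, rfl⟩)⟩
    have hCanti : ∀ {m n : ℕ}, m ≤ n → C n ⊆ C m := fun {m n} h =>
      closure_mono (convexHull_mono (Set.image_mono (Set.Ici_subset_Ici.2 h)))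
    have hCbd : ∀ n, C n ⊆ Metric.closedBall 0 R := by
      intro n
      refine closure_minimal (convexHull_min ?_ (convex_closedBall 0 R)) Metric.isClosed_closedBall
      rintro y ⟨k, -, rfl⟩
      exact hR (hψ k)
    obtain ⟨x, hxmem⟩ := nested_inter_nonempty C hCne (fun n => isClosed_closure)
      (fun n => (convex_convexHull ℝ _).closure) hCanti hCbd
    have hxC : ∀ n, x ∈ C n := fun n => Set.mem_iInter.1 hxmem n
    -- the limit point has small value
    have hφx : ∀ n : ℕ, φ x ≤ t n := by
      intro n
      have hclosed : IsClosed {y : X | φ y ≤ t n} := hlsc.isClosed_preimage (t n)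
      have hconvex : Convex ℝ {y : X | φ y ≤ t n} := convexEReal_sublevel hconv (t n)
      have hsub : C n ⊆ {y : X | φ y ≤ t n} := by
        refine closure_minimal (convexHull_min ?_ hconvex) hclosed
        rintro y ⟨k, hk, rfl⟩
        refine le_trans (hφxs k).le ?_
        have hnk : ((n:ℝ)+1) ≤ ((k:ℝ)+1) := by
          have : (n:ℝ) ≤ (k:ℝ) := Nat.cast_le.2 hk
          linarith
        have : (1:ℝ)/((k:ℝ)+1) ≤ 1/((n:ℝ)+1) :=
          one_div_le_one_div_of_le (by positivity) hnk
        exact EReal.coe_le_coe_iff.2 (by linarith)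
      exact hsub (hxC n)
    have hne_top : φ x ≠ ⊤ := by
      intro h
      have := hφx 0
      rw [h, ht] at this
      exact (EReal.coe_lt_top _).not_ge this
    have hφxc : φ x ≤ (c : EReal) := by
      set r : ℝ := (φ x).toReal with hrdef
      have hr : φ x = (r : EReal) := (EReal.coe_toReal hne_top (hbot x)).symm
      rw [hr]
      refine EReal.coe_le_coe_iff.2 ?_
      have hrle : ∀ n : ℕ, r ≤ c + 1/((n:ℝ)+1) := by
        intro n
        have := hφx n
        rw [hr, ht] at this
        exact EReal.coe_le_coe_iff.1 this
      have hlim : Tendsto (fun n : ℕ => c + 1/((n:ℝ)+1)) atTop (𝓝 (c + 0)) :=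
        Tendsto.add tendsto_const_nhds tendsto_one_div_add_atTop_nhds_zero_nat
      rw [add_zero] at hlim
      exact ge_of_tendsto' hlim hrle
    -- the limit point lies over z
    have hExz : E x = z := by
      apply eq_of_forall_dist_le
      intro ε hε
      obtain ⟨N, hN⟩ := Metric.tendsto_atTop.1 hz ε hε
      have hsub : C N ⊆ E ⁻¹' Metric.closedBall z ε := by
        refine closure_minimal (convexHull_min ?_
          ((convex_closedBall z ε).linear_preimage (E : X →ₗ[ℝ] Z)))
          (Metric.isClosed_closedBall.preimage E.continuous)
        rintro y ⟨k, hk, rfl⟩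
        simp only [Set.mem_preimage, hxs k]
        exact Metric.mem_closedBall.2 (le_of_lt (hN k hk))
      exact hsub (hxC N)
    have hfinal : sInf (φ '' {x' : X | E x' = z}) ≤ φ x := sInf_le ⟨x, hExz, rfl⟩
    exact le_trans hfinal hφxc
  exact hseq.isClosed
end

section
/- Let X and Z be real Hilbert spaces, let E : X → Z be a bounded linear operator with dense range and adjoint E* : Z → X, and let φ : X → ℝ ∪ {+∞} be proper, densely defined, convex, lower semicontinuous and E-elliptic. Let φ_E(z) = inf{φ(x) : x ∈ X, Ex = z}. Then for z, g ∈ Z the following are equivalent: (i) (z,g) belongs to the subgradient ∂φ_E of φ_E, i.e. z ∈ D(φ_E) and φ_E(z + w) ≥ φ_E(z) + ⟨g, w⟩_Z for all w ∈ Z; (ii) there exists x ∈ D(φ) with Ex = z, φ(x) = φ_E(z), and (x, E*g) ∈ ∂φ, i.e. φ(x + v) ≥ φ(x) + ⟨E*g, v⟩_X for all v ∈ X. -/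
open RealInnerProductSpace MeasureTheory

variable {X Z : Type*} [NormedAddCommGroup X] [InnerProductSpace ℝ X] [CompleteSpace X]
  [NormedAddCommGroup Z] [InnerProductSpace ℝ Z] [CompleteSpace Z]

open Bornology

lemma EReal.exists_coe_eq {u : EReal} (h1 : u ≠ ⊥) (h2 : u ≠ ⊤) : ∃ r : ℝ, u = (r : EReal) :=
  ⟨u.toReal, (EReal.coe_toReal h2 h1).symm⟩

lemma EReal.le_coe_of_forall_lt {u : EReal} {s : ℝ} (h : ∀ b : ℝ, (b : EReal) < u → b ≤ s) :
    u ≤ (s : EReal) := by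
  by_contra hlt
  obtain ⟨b, hb1, hb2⟩ := EReal.exists_between_coe_real (not_le.1 hlt)
  exact absurd (h b hb2) (not_le.2 (EReal.coe_lt_coe_iff.1 hb1))

/-- Multiplication by a nonnegative real distributes over `(c : EReal) + u` when `u ≠ ⊥`. -/
lemma EReal.coe_mul_coe_add {a c : ℝ} (ha : 0 ≤ a) {u : EReal} (hu : u ≠ ⊥) :
    (a : EReal) * ((c : EReal) + u) = ((a * c : ℝ) : EReal) + (a : EReal) * u := by
  induction u with
  | bot => exact absurd rfl hu
  | coe r => norm_cast; ring
  | top =>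
    rcases eq_or_lt_of_le ha with h0 | h0
    · simp [← h0]
    · rw [EReal.coe_add_top, EReal.mul_top_of_pos (by exact_mod_cast h0)]
      exact (EReal.coe_add_top _).symm

lemma midpoint_norm_sq {X : Type*} [NormedAddCommGroup X] [InnerProductSpace ℝ X] (x y : X) :
    ‖(1/2 : ℝ) • x + (1/2 : ℝ) • y‖ ^ 2 = ‖x‖ ^ 2 / 2 + ‖y‖ ^ 2 / 2 - ‖x - y‖ ^ 2 / 4 := by
  have h1 : (1/2 : ℝ) • x + (1/2 : ℝ) • y = (1/2 : ℝ) • (x + y) := by rw [smul_add]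
  rw [h1, norm_smul]
  have h2 := parallelogram_law_with_norm ℝ x y
  have h3 : ‖(1/2 : ℝ)‖ = 1/2 := by rw [Real.norm_eq_abs]; norm_num
  rw [h3]
  nlinarith [h2, norm_nonneg (x + y), norm_nonneg (x - y)]

/-- Existence of a minimizer for the Tikhonov-regularized problem on a closed convex set. -/
lemma exists_min_strong {X : Type*} [NormedAddCommGroup X] [InnerProductSpace ℝ X]
    [CompleteSpace X] {F : Set X} (hcl : IsClosed F) (hcx : Convex ℝ F)
    {h : X → EReal} (hb : ∀ x, h x ≠ ⊥)
    (hconvF : ∀ x ∈ F, ∀ y ∈ F, ∀ a b : ℝ, 0 ≤ a → 0 ≤ b → a + b = 1 →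
      h (a • x + b • y) ≤ (a : EReal) * h x + (b : EReal) * h y)
    (hlsc : LowerSemicontinuous h)
    {c : ℝ} (hc : ∀ x ∈ F, (c : EReal) ≤ h x)
    {v0 : X} (hv0F : v0 ∈ F) (hv0 : h v0 < ⊤)
    {lam : ℝ} (hlam : 0 < lam) :
    ∃ x ∈ F, h x < ⊤ ∧ ∀ y ∈ F,
      h x + ((lam * ‖x‖ ^ 2 : ℝ) : EReal) ≤ h y + ((lam * ‖y‖ ^ 2 : ℝ) : EReal) := by
  classical
  set D : Set X := {x | x ∈ F ∧ h x < ⊤} with hD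
  set q : X → ℝ := fun x => (h x).toReal + lam * ‖x‖ ^ 2 with hq
  -- value of h on D is the coe of its toReal
  have hre : ∀ x ∈ D, h x = (((h x).toReal : ℝ) : EReal) :=
    fun x hx => (EReal.coe_toReal hx.2.ne (hb x)).symm
  have hSne : (q '' D).Nonempty := ⟨q v0, v0, ⟨hv0F, hv0⟩, rfl⟩
  have hSbdd : BddBelow (q '' D) := by
    refine ⟨c, ?_⟩
    rintro _ ⟨x, hx, rfl⟩
    have h1 : c ≤ (h x).toReal := by
      have := EReal.toReal_le_toReal (hc x hx.1) (EReal.coe_ne_bot c) hx.2.ne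
      simpa using this
    have : 0 ≤ lam * ‖x‖ ^ 2 := by positivity
    simp only [hq]; linarith
  set m := sInf (q '' D) with hm
  -- minimizing sequence
  have hseq : ∀ n : ℕ, ∃ x, x ∈ D ∧ q x < m + (1/2) ^ n := by
    intro n
    obtain ⟨a, ⟨x, hx, rfl⟩, ha⟩ := Real.lt_sInf_add_pos hSne (show (0:ℝ) < (1/2)^n by positivity)
    exact ⟨x, hx, ha⟩
  choose u huD huq using hseq
  have hqlb : ∀ x ∈ D, m ≤ q x := fun x hx => csInf_le hSbdd ⟨x, hx, rfl⟩
  -- strong convexity estimate between members of the minimizing sequence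
  have key : ∀ j k : ℕ, lam / 4 * ‖u j - u k‖ ^ 2 ≤ (1/2)^j / 2 + (1/2)^k / 2 := by
    intro j k
    set w := (1/2 : ℝ) • u j + (1/2 : ℝ) • u k with hw
    have hwF : w ∈ F := hcx (huD j).1 (huD k).1 (by norm_num) (by norm_num) (by norm_num)
    have hmid := hconvF (u j) (huD j).1 (u k) (huD k).1 (1/2) (1/2)
      (by norm_num) (by norm_num) (by norm_num)
    rw [hre (u j) (huD j), hre (u k) (huD k)] at hmid
    have hmid' : h w ≤ (((1/2) * (h (u j)).toReal + (1/2) * (h (u k)).toReal : ℝ) : EReal) := by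
      rw [EReal.coe_add, EReal.coe_mul, EReal.coe_mul]; exact hmid
    have hwD : w ∈ D := ⟨hwF, lt_of_le_of_lt hmid' (EReal.coe_lt_top _)⟩
    have hwre : (h w).toReal ≤ (1/2) * (h (u j)).toReal + (1/2) * (h (u k)).toReal := by
      have := EReal.toReal_le_toReal hmid' (hb w) (EReal.coe_ne_top _)
      rwa [EReal.toReal_coe] at this
    have hnorm : ‖w‖ ^ 2 = ‖u j‖ ^ 2 / 2 + ‖u k‖ ^ 2 / 2 - ‖u j - u k‖ ^ 2 / 4 :=
      midpoint_norm_sq (u j) (u k)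
    have h1 := hqlb w hwD
    have h2 := huq j
    have h3 := huq k
    simp only [hq] at h1 h2 h3
    nlinarith [h1, h2, h3, hwre, hnorm]
  -- the minimizing sequence is Cauchy
  have hcauchy : CauchySeq u := by
    rw [Metric.cauchySeq_iff]
    intro ε hε
    obtain ⟨N, hN⟩ := exists_pow_lt_of_lt_one (show (0:ℝ) < lam / 4 * ε ^ 2 by positivity)
      (show (1/2 : ℝ) < 1 by norm_num)
    refine ⟨N, fun j hj k hk => ?_⟩
    have hkey := key j k
    have hj' : ((1:ℝ)/2) ^ j ≤ (1/2) ^ N := pow_le_pow_of_le_one (by norm_num) (by norm_num) hj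
    have hk' : ((1:ℝ)/2) ^ k ≤ (1/2) ^ N := pow_le_pow_of_le_one (by norm_num) (by norm_num) hk
    have hd : dist (u j) (u k) = ‖u j - u k‖ := dist_eq_norm _ _
    have hsq : ‖u j - u k‖ ^ 2 < ε ^ 2 := by nlinarith [hN]
    rw [hd]
    exact lt_of_pow_lt_pow_left₀ 2 (le_of_lt hε) hsq
  obtain ⟨xb, hxb⟩ := cauchySeq_tendsto_of_complete hcauchy
  have hxbF : xb ∈ F := hcl.mem_of_tendsto hxb (Filter.Eventually.of_forall fun n => (huD n).1)
  -- limit of the regularized values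
  have hnormt : Filter.Tendsto (fun n => lam * ‖u n‖ ^ 2) Filter.atTop (nhds (lam * ‖xb‖ ^ 2)) := by
    exact (Filter.Tendsto.norm (hxb)).pow 2 |>.const_mul lam
  have hupper : h xb ≤ (((m - lam * ‖xb‖ ^ 2 : ℝ)) : EReal) := by
    apply EReal.le_coe_of_forall_lt
    intro b hblt
    have hev1 : ∀ᶠ n in Filter.atTop, (b : EReal) < h (u n) := hxb.eventually (hlsc xb b hblt)
    have hev2 : ∀ᶠ n in Filter.atTop, b ≤ m + (1/2)^n - lam * ‖u n‖ ^ 2 := by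
      filter_upwards [hev1] with n hn
      have : (b : EReal) < (((h (u n)).toReal : ℝ) : EReal) := by rwa [← hre (u n) (huD n)]
      have hb' : b < (h (u n)).toReal := EReal.coe_lt_coe_iff.1 this
      have := huq n
      simp only [hq] at this
      linarith
    have htend : Filter.Tendsto (fun n => m + (1/2:ℝ)^n - lam * ‖u n‖ ^ 2) Filter.atTop
        (nhds (m - lam * ‖xb‖ ^ 2)) := by
      have hpow : Filter.Tendsto (fun n : ℕ => m + (1/2:ℝ)^n) Filter.atTop (nhds (m + 0)) :=
        (tendsto_pow_atTop_nhds_zero_of_lt_one (by norm_num) (by norm_num)).const_add m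
      simpa using hpow.sub hnormt
    exact ge_of_tendsto htend hev2
  have hxbT : h xb < ⊤ := lt_of_le_of_lt hupper (EReal.coe_lt_top _)
  refine ⟨xb, hxbF, hxbT, fun y hyF => ?_⟩
  by_cases hyT : h y = ⊤
  · rw [hyT, EReal.top_add_coe]; exact le_top
  · have hyD : y ∈ D := ⟨hyF, lt_top_iff_ne_top.2 hyT⟩
    have h1 : m ≤ q y := hqlb y hyD
    calc h xb + ((lam * ‖xb‖ ^ 2 : ℝ) : EReal)
        ≤ (((m - lam * ‖xb‖ ^ 2 : ℝ)) : EReal) + ((lam * ‖xb‖ ^ 2 : ℝ) : EReal) :=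
          add_le_add_left hupper _
      _ = ((m : ℝ) : EReal) := by rw [← EReal.coe_add]; norm_num
      _ ≤ (((h y).toReal + lam * ‖y‖ ^ 2 : ℝ) : EReal) := EReal.coe_le_coe_iff.2 h1
      _ = h y + ((lam * ‖y‖ ^ 2 : ℝ) : EReal) := by
          rw [EReal.coe_add, ← hre y hyD]

set_option maxHeartbeats 1000000 in
/-- A convex, lsc, coercive `EReal` functional (nowhere `⊥`) attains its infimum
on a closed convex set, provided the infimum is `< ⊤`. -/
lemma exists_min_of_coercive {X : Type*} [NormedAddCommGroup X] [InnerProductSpace ℝ X]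
    [CompleteSpace X] {F : Set X} (hcl : IsClosed F) (hcx : Convex ℝ F)
    {h : X → EReal} (hb : ∀ x, h x ≠ ⊥)
    (hconvF : ∀ x ∈ F, ∀ y ∈ F, ∀ a b : ℝ, 0 ≤ a → 0 ≤ b → a + b = 1 →
      h (a • x + b • y) ≤ (a : EReal) * h x + (b : EReal) * h y)
    (hlsc : LowerSemicontinuous h)
    (hcoer : ∀ c : ℝ, IsBounded {x | x ∈ F ∧ h x ≤ (c : EReal)})
    (hfin : sInf (h '' F) < ⊤) :
    ∃ x ∈ F, h x = sInf (h '' F) := by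
  classical
  -- a point with finite value
  obtain ⟨v0, hv0F, hv0⟩ : ∃ v ∈ F, h v < ⊤ := by
    obtain ⟨b, ⟨x, hx, rfl⟩, hlt⟩ := sInf_lt_iff.1 hfin
    exact ⟨x, hx, hlt⟩
  obtain ⟨a0, ha0⟩ := EReal.exists_coe_eq (hb v0) hv0.ne
  -- the infimum is not ⊥ : h is bounded below on F
  have hbotlb : ∃ c : ℝ, ∀ x ∈ F, (c : EReal) ≤ h x := by
    by_contra hcon
    push_neg at hcon
    have hseq : ∀ n : ℕ, ∃ x, x ∈ F ∧ h x < ((-((n : ℝ) + 1) ^ 2 : ℝ) : EReal) := by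
      intro n
      obtain ⟨x, hxF, hxlt⟩ := hcon (-((n : ℝ) + 1) ^ 2)
      exact ⟨x, hxF, hxlt⟩
    choose u huF hu using hseq
    -- the u n live in a sublevel set, hence are bounded
    obtain ⟨R, hR⟩ := (hcoer 0).subset_closedBall 0
    have huball : ∀ n, ‖u n‖ ≤ R := by
      intro n
      have : u n ∈ Metric.closedBall 0 R := hR ⟨huF n, le_of_lt (lt_of_lt_of_le (hu n)
        (EReal.coe_le_coe_iff.2 (by nlinarith [sq_nonneg ((n:ℝ)+1)])))⟩
      simpa using this
    have hunT : ∀ n, h (u n) ≠ ⊤ := fun n => (lt_of_lt_of_le (hu n) le_top).ne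
    set r : ℕ → ℝ := fun n => (h (u n)).toReal with hrdef
    have hre : ∀ n, h (u n) = ((r n : ℝ) : EReal) :=
      fun n => (EReal.coe_toReal (hunT n) (hb (u n))).symm
    have hrn : ∀ n, r n ≤ -((n : ℝ) + 1) ^ 2 := by
      intro n
      have := (hu n).le
      rw [hre n] at this
      exact EReal.coe_le_coe_iff.1 this
    set t : ℕ → ℝ := fun n => 1 / ((n : ℝ) + 1) with htdef
    have htpos : ∀ n, 0 < t n := fun n => by positivity
    have ht1 : ∀ n, t n ≤ 1 := fun n => by
      rw [htdef]
      rw [div_le_one (by positivity)]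
      linarith [Nat.cast_nonneg (α := ℝ) n]
    set y : ℕ → X := fun n => (1 - t n) • v0 + t n • u n with hydef
    have hyF : ∀ n, y n ∈ F := fun n =>
      hcx hv0F (huF n) (by linarith [ht1 n]) (le_of_lt (htpos n)) (by ring)
    have hyval : ∀ n, h (y n) ≤ (((1 - t n) * a0 + t n * r n : ℝ) : EReal) := by
      intro n
      have := hconvF v0 hv0F (u n) (huF n) (1 - t n) (t n)
        (by linarith [ht1 n]) (le_of_lt (htpos n)) (by ring)
      rw [ha0, hre n] at this
      rw [EReal.coe_add, EReal.coe_mul, EReal.coe_mul]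
      exact this
    have hybound : ∀ n : ℕ, (1 - t n) * a0 + t n * r n ≤ |a0| - ((n : ℝ) + 1) := by
      intro n
      have hn1 : (0:ℝ) < (n : ℝ) + 1 := by positivity
      have h1 : t n * r n ≤ t n * (-((n : ℝ) + 1) ^ 2) :=
        mul_le_mul_of_nonneg_left (hrn n) (le_of_lt (htpos n))
      have h1' : t n * (-((n : ℝ) + 1) ^ 2) = -((n : ℝ) + 1) := by
        rw [htdef]; field_simp
      have h2 : (1 - t n) * a0 ≤ |a0| := by
        have := le_abs_self a0
        have := neg_abs_le a0
        nlinarith [ht1 n, htpos n, abs_nonneg a0]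
      linarith [h1' ▸ h1]
    -- y n → v0
    have hytend : Filter.Tendsto y Filter.atTop (nhds v0) := by
      have hnorm : ∀ n, ‖y n - v0‖ ≤ t n * (R + ‖v0‖) := by
        intro n
        have : y n - v0 = t n • (u n - v0) := by
          rw [hydef]; simp only [sub_smul, one_smul, smul_sub]; abel
        rw [this, norm_smul, Real.norm_eq_abs, abs_of_pos (htpos n)]
        have : ‖u n - v0‖ ≤ R + ‖v0‖ := le_trans (norm_sub_le _ _) (by linarith [huball n])
        exact mul_le_mul_of_nonneg_left this (le_of_lt (htpos n))
      have httend : Filter.Tendsto t Filter.atTop (nhds 0) :=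
        tendsto_one_div_add_atTop_nhds_zero_nat
      rw [tendsto_iff_norm_sub_tendsto_zero]
      apply squeeze_zero (fun n => norm_nonneg _) hnorm
      have h0 := httend.mul_const (R + ‖v0‖)
      rw [zero_mul] at h0
      exact h0
    -- lower semicontinuity gives a contradiction
    have hev1 : ∀ᶠ n in Filter.atTop, ((a0 - 1 : ℝ) : EReal) < h (y n) :=
      hytend.eventually (hlsc v0 _ (by show ((a0 - 1 : ℝ) : EReal) < h v0; rw [ha0]; exact_mod_cast (by linarith : a0 - 1 < a0)))
    have hev2 : ∀ᶠ n : ℕ in Filter.atTop, |a0| - a0 + 1 ≤ (n : ℝ) :=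
      (tendsto_natCast_atTop_atTop :
        Filter.Tendsto (fun n : ℕ => (n : ℝ)) Filter.atTop Filter.atTop).eventually_ge_atTop _
    obtain ⟨n, hn1, hn2⟩ := (hev1.and hev2).exists
    have : ((a0 - 1 : ℝ) : EReal) < (((1 - t n) * a0 + t n * r n : ℝ) : EReal) :=
      lt_of_lt_of_le hn1 (hyval n)
    have hlt : a0 - 1 < (1 - t n) * a0 + t n * r n := EReal.coe_lt_coe_iff.1 this
    have := hybound n
    linarith
  obtain ⟨c, hc⟩ := hbotlb
  -- regularized minimizers
  have hexists : ∀ k : ℕ, ∃ x ∈ F, h x < ⊤ ∧ ∀ y ∈ F,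
      h x + (((1/2:ℝ)^k * ‖x‖ ^ 2 : ℝ) : EReal) ≤ h y + (((1/2:ℝ)^k * ‖y‖ ^ 2 : ℝ) : EReal) :=
    fun k => exists_min_strong hcl hcx hb hconvF hlsc hc hv0F hv0 (by positivity)
  choose x hxF hxT hxmin using hexists
  set r : ℕ → ℝ := fun k => (h (x k)).toReal with hrdef
  have hre : ∀ k, h (x k) = ((r k : ℝ) : EReal) :=
    fun k => (EReal.coe_toReal (hxT k).ne (hb (x k))).symm
  set s : ℕ → ℝ := fun k => ‖x k‖ ^ 2 with hsdef
  -- real form of minimality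
  have P : ∀ j k : ℕ, r j + (1/2:ℝ)^j * s j ≤ r k + (1/2:ℝ)^j * s k := by
    intro j k
    have := hxmin j (x k) (hxF k)
    rw [hre j, hre k] at this
    rw [← EReal.coe_add, ← EReal.coe_add] at this
    exact EReal.coe_le_coe_iff.1 this
  have Pv : ∀ k : ℕ, r k + (1/2:ℝ)^k * s k ≤ a0 + (1/2:ℝ)^k * ‖v0‖ ^ 2 := by
    intro k
    have := hxmin k v0 hv0F
    rw [hre k, ha0, ← EReal.coe_add, ← EReal.coe_add] at this
    exact EReal.coe_le_coe_iff.1 this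
  -- norms are monotone and bounded
  have hsnonneg : ∀ k, 0 ≤ s k := fun k => by positivity
  have hrbound : ∀ k, r k ≤ a0 + ‖v0‖ ^ 2 := by
    intro k
    have h1 := Pv k
    have h2 : 0 ≤ (1/2:ℝ)^k * s k := by positivity
    have h3 : (1/2:ℝ)^k * ‖v0‖ ^ 2 ≤ ‖v0‖ ^ 2 := by
      have : (1/2:ℝ)^k ≤ 1 := pow_le_one₀ (by norm_num) (by norm_num)
      nlinarith [sq_nonneg ‖v0‖]
    linarith
  obtain ⟨R, hR⟩ := (hcoer (a0 + ‖v0‖ ^ 2)).subset_closedBall 0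
  have hxball : ∀ k, ‖x k‖ ≤ R := by
    intro k
    have : x k ∈ Metric.closedBall 0 R := hR ⟨hxF k, by
      rw [hre k]; exact EReal.coe_le_coe_iff.2 (hrbound k)⟩
    simpa using this
  have hsmono : Monotone s := by
    apply monotone_nat_of_le_succ
    intro k
    have h1 := P k (k+1)
    have h2 := P (k+1) k
    have h3 : (1/2:ℝ)^(k+1) < (1/2:ℝ)^k :=
      pow_lt_pow_right_of_lt_one₀ (by norm_num) (by norm_num) (by omega)
    nlinarith
  have hsbdd : ∀ k, s k ≤ R ^ 2 := by
    intro k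
    have := hxball k
    have : ‖x k‖ ^ 2 ≤ R ^ 2 := by nlinarith [norm_nonneg (x k)]
    exact this
  have hstend : Filter.Tendsto s Filter.atTop (nhds (⨆ k, s k)) :=
    tendsto_atTop_ciSup hsmono ⟨R ^ 2, fun _ ⟨k, hk⟩ => hk ▸ hsbdd k⟩
  -- strong convexity: distance controlled by norm increments
  have key : ∀ j k : ℕ, j ≤ k → ‖x k - x j‖ ^ 2 ≤ 2 * (s k - s j) := by
    intro j k hjk
    set w := (1/2 : ℝ) • x j + (1/2 : ℝ) • x k with hw
    have hwF : w ∈ F := hcx (hxF j) (hxF k) (by norm_num) (by norm_num) (by norm_num)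
    have hmid := hconvF (x j) (hxF j) (x k) (hxF k) (1/2) (1/2)
      (by norm_num) (by norm_num) (by norm_num)
    rw [hre j, hre k] at hmid
    have hmid' : h w ≤ (((1/2) * r j + (1/2) * r k : ℝ) : EReal) := by
      rw [EReal.coe_add, EReal.coe_mul, EReal.coe_mul]; exact hmid
    have hwT : h w ≠ ⊤ := (lt_of_le_of_lt hmid' (EReal.coe_lt_top _)).ne
    obtain ⟨rw', hrw⟩ := EReal.exists_coe_eq (hb w) hwT
    have hwre : rw' ≤ (1/2) * r j + (1/2) * r k := by
      rw [hrw] at hmid'; exact EReal.coe_le_coe_iff.1 hmid'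
    have hnorm : ‖w‖ ^ 2 = s j / 2 + s k / 2 - ‖x j - x k‖ ^ 2 / 4 := midpoint_norm_sq (x j) (x k)
    -- minimality of x j against w
    have hminw := hxmin j w hwF
    rw [hre j, hrw, ← EReal.coe_add, ← EReal.coe_add] at hminw
    have hminw' : r j + (1/2:ℝ)^j * s j ≤ rw' + (1/2:ℝ)^j * ‖w‖ ^ 2 :=
      EReal.coe_le_coe_iff.1 hminw
    -- r k ≤ r j
    have hrk : r k - r j ≤ (1/2:ℝ)^k * (s j - s k) := by have := P k j; nlinarith
    have hsjk : s j ≤ s k := hsmono hjk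
    have hrk' : r k ≤ r j := by
      have h4 : (1/2:ℝ)^k * (s j - s k) ≤ 0 := by
        have : (0:ℝ) < (1/2:ℝ)^k := by positivity
        nlinarith
      linarith
    have hlampos : (0:ℝ) < (1/2:ℝ)^j := by positivity
    have hnsr : ‖x k - x j‖ = ‖x j - x k‖ := norm_sub_rev _ _
    rw [show ‖x k - x j‖ ^ 2 = ‖x j - x k‖ ^ 2 by rw [hnsr]]
    nlinarith [hminw', hwre, hnorm, hrk']
  -- the x k form a Cauchy sequence
  have hcauchy : CauchySeq x := by
    rw [Metric.cauchySeq_iff]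
    intro ε hε
    have hscauchy := hstend.cauchySeq
    rw [Metric.cauchySeq_iff] at hscauchy
    obtain ⟨N, hN⟩ := hscauchy (ε ^ 2 / 2) (by positivity)
    refine ⟨N, fun j hj k hk => ?_⟩
    rcases le_total j k with hjk | hjk
    · have h1 := key j k hjk
      have h2 := hN k hk j hj
      rw [Real.dist_eq] at h2
      have : s k - s j < ε ^ 2 / 2 := lt_of_le_of_lt (le_abs_self _) h2
      rw [dist_eq_norm, show ‖x j - x k‖ = ‖x k - x j‖ from norm_sub_rev _ _]
      exact lt_of_pow_lt_pow_left₀ 2 (le_of_lt hε) (by nlinarith)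
    · have h1 := key k j hjk
      have h2 := hN j hj k hk
      rw [Real.dist_eq] at h2
      have : s j - s k < ε ^ 2 / 2 := lt_of_le_of_lt (le_abs_self _) h2
      rw [dist_eq_norm]
      exact lt_of_pow_lt_pow_left₀ 2 (le_of_lt hε) (by nlinarith)
  obtain ⟨xb, hxb⟩ := cauchySeq_tendsto_of_complete hcauchy
  have hxbF : xb ∈ F := hcl.mem_of_tendsto hxb (Filter.Eventually.of_forall fun n => hxF n)
  -- xb is a global minimizer on F
  have hmin : ∀ y ∈ F, h xb ≤ h y := by
    intro y hyF
    by_cases hyT : h y = ⊤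
    · rw [hyT]; exact le_top
    · obtain ⟨ay, hay⟩ := EReal.exists_coe_eq (hb y) hyT
      rw [hay]
      apply EReal.le_coe_of_forall_lt
      intro b hblt
      have hev1 : ∀ᶠ k in Filter.atTop, (b : EReal) < h (x k) := hxb.eventually (hlsc xb b hblt)
      have hev2 : ∀ᶠ k in Filter.atTop, b ≤ ay + (1/2:ℝ)^k * ‖y‖ ^ 2 := by
        filter_upwards [hev1] with k hk
        have hb' : b < r k := by
          rw [hre k] at hk; exact EReal.coe_lt_coe_iff.1 hk
        have hky := hxmin k y hyF
        rw [hre k, hay, ← EReal.coe_add, ← EReal.coe_add] at hky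
        have hky' : r k + (1/2:ℝ)^k * s k ≤ ay + (1/2:ℝ)^k * ‖y‖ ^ 2 :=
          EReal.coe_le_coe_iff.1 hky
        have : 0 ≤ (1/2:ℝ)^k * s k := by positivity
        linarith
      have htend : Filter.Tendsto (fun k : ℕ => ay + (1/2:ℝ)^k * ‖y‖ ^ 2) Filter.atTop
          (nhds ay) := by
        have : Filter.Tendsto (fun k : ℕ => (1/2:ℝ)^k * ‖y‖ ^ 2) Filter.atTop (nhds 0) := by
          simpa using (tendsto_pow_atTop_nhds_zero_of_lt_one
            (by norm_num : (0:ℝ) ≤ 1/2) (by norm_num)).mul_const (‖y‖ ^ 2)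
        simpa using this.const_add ay
      exact ge_of_tendsto htend hev2
  refine ⟨xb, hxbF, le_antisymm (le_sInf ?_) (sInf_le ⟨xb, hxbF, rfl⟩)⟩
  rintro b ⟨y, hyF, rfl⟩
  exact hmin y hyF

/-- Characterization of the subgradient of the push-forward functional
`φ_E(z) = inf {φ(x) : E x = z}`: `(z,g) ∈ ∂φ_E` iff there is `x ∈ D(φ)` with `E x = z`,
`φ(x) = φ_E(z)` and `(x, E*g) ∈ ∂φ`. -/
theorem pushForward_subgradient (E : X →L[ℝ] Z) (hrange : Dense (Set.range E))
    (φ : X → EReal) (hbot : ∀ x, φ x ≠ ⊥) (hproper : ∃ x, φ x < ⊤)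
    (hdense : Dense {x : X | φ x < ⊤}) (hconv : ConvexEReal φ)
    (hlsc : LowerSemicontinuous φ) (hell : IsElliptic E φ)
    (z g : Z) :
    (pushForward E φ z < ⊤ ∧
        ∀ w : Z, pushForward E φ (z + w) ≥ pushForward E φ z + ((⟪g, w⟫ : ℝ) : EReal)) ↔
      (∃ x : X, φ x < ⊤ ∧ E x = z ∧ φ x = pushForward E φ z ∧
        ∀ v : X, φ (x + v) ≥ φ x + ((⟪ContinuousLinearMap.adjoint E g, v⟫ : ℝ) : EReal)) := by
  obtain ⟨ω, hψconv, hψcoer⟩ := hell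
  have hcl : IsClosed {x : X | E x = z} := isClosed_eq E.continuous continuous_const
  have hcx : Convex ℝ {x : X | E x = z} := by
    intro x hx y hy a b ha hb' hab
    have hx' : E x = z := hx
    have hy' : E y = z := hy
    show E (a • x + b • y) = z
    rw [map_add, E.map_smul, E.map_smul, hx', hy', ← add_smul, hab, one_smul]
  have hconvF : ∀ x ∈ {x : X | E x = z}, ∀ y ∈ {x : X | E x = z}, ∀ a b : ℝ,
      0 ≤ a → 0 ≤ b → a + b = 1 →
      φ (a • x + b • y) ≤ (a : EReal) * φ x + (b : EReal) * φ y := by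
    intro x hx y hy a b ha hb' hab
    have hx' : E x = z := hx
    have hy' : E y = z := hy
    have hE : E (a • x + b • y) = z := hcx hx hy ha hb' hab
    have h1 := hψconv x y a b ha hb' hab
    simp only [hE, hx', hy'] at h1
    rw [EReal.coe_mul_coe_add ha (hbot x), EReal.coe_mul_coe_add hb' (hbot y)] at h1
    have h2 : ((a * (ω / 2 * ‖z‖ ^ 2) : ℝ) : EReal) + (a : EReal) * φ x +
        (((b * (ω / 2 * ‖z‖ ^ 2) : ℝ) : EReal) + (b : EReal) * φ y)
        = ((ω / 2 * ‖z‖ ^ 2 : ℝ) : EReal) + ((a : EReal) * φ x + (b : EReal) * φ y) := by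
      rw [add_add_add_comm, ← EReal.coe_add]
      congr 2
      rw [← add_mul, hab, one_mul]
    rw [h2] at h1
    exact EReal.addLECancellable_coe (ω / 2 * ‖z‖ ^ 2) h1
  have hcoer : ∀ c : ℝ, Bornology.IsBounded
      {x | x ∈ {x : X | E x = z} ∧ φ x ≤ (c : EReal)} := by
    intro c
    apply (hψcoer (ω / 2 * ‖z‖ ^ 2 + c)).subset
    rintro x ⟨hx, hxc⟩
    have hx' : E x = z := hx
    show ((ω / 2 * ‖E x‖ ^ 2 : ℝ) : EReal) + φ x ≤ ((ω / 2 * ‖z‖ ^ 2 + c : ℝ) : EReal)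
    rw [hx', EReal.coe_add]
    exact add_le_add_right hxc _
  constructor
  · rintro ⟨hfin, hsub⟩
    obtain ⟨x, hxF, hxeq⟩ := exists_min_of_coercive hcl hcx hbot hconvF hlsc hcoer hfin
    have hxz : E x = z := hxF
    have hxeq' : φ x = pushForward E φ z := hxeq
    refine ⟨x, by rw [hxeq']; exact hfin, hxz, hxeq', fun v => ?_⟩
    have h1 : pushForward E φ (z + E v) ≤ φ (x + v) := by
      apply sInf_le
      exact ⟨x + v, by show E (x + v) = z + E v; rw [map_add, hxz], rfl⟩
    have h2 : pushForward E φ z + ((⟪g, E v⟫ : ℝ) : EReal) ≤ pushForward E φ (z + E v) :=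
      hsub (E v)
    show φ x + ((⟪ContinuousLinearMap.adjoint E g, v⟫ : ℝ) : EReal) ≤ φ (x + v)
    calc φ x + ((⟪ContinuousLinearMap.adjoint E g, v⟫ : ℝ) : EReal)
        = pushForward E φ z + ((⟪g, E v⟫ : ℝ) : EReal) := by
          rw [hxeq', ContinuousLinearMap.adjoint_inner_left]
      _ ≤ pushForward E φ (z + E v) := h2
      _ ≤ φ (x + v) := h1
  · rintro ⟨x, hxT, hxz, hxeq, hxsub⟩
    refine ⟨by rw [← hxeq]; exact hxT, fun w => ?_⟩
    show pushForward E φ z + ((⟪g, w⟫ : ℝ) : EReal) ≤ pushForward E φ (z + w)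
    apply le_sInf
    rintro b ⟨y, hy, rfl⟩
    have hy' : E y = z + w := hy
    have hv := hxsub (y - x)
    have hxy : x + (y - x) = y := by abel
    rw [hxy] at hv
    have hEv : E (y - x) = w := by rw [map_sub, hy', hxz]; abel
    calc pushForward E φ z + ((⟪g, w⟫ : ℝ) : EReal)
        = φ x + ((⟪ContinuousLinearMap.adjoint E g, y - x⟫ : ℝ) : EReal) := by
          rw [← hxeq, ContinuousLinearMap.adjoint_inner_left, hEv]
      _ ≤ φ y := hv
end
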